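/- arXiv:2004.11581 — 8 statements merged into one kernel-verified Lean document; each statement's English description precedes it below -/
import Mathlib

section
/- Let φ ∈ A[δ,M] be an almost flow, π = {0 = t_0 < … < t_n = T} a partition of [0,T] and a ∈ V. Then the numerical scheme y of φ on π started at a (y_{t_0} = a, y_{t_{k+1}} = φ_{t_{k+1},t_k}(y_{t_k})) satisfies ‖y_{t_j} − φ_{t_j,t_i}(y_{t_i})‖ ≤ L·ϖ(ω(t_i,t_j)) for all 0 ≤ i ≤ j ≤ n, where L := 2(δ(T) + M)/(1 − κ − 2δ(T)). In particular y ∈ P_π[φ,a,L], so P_π[φ,a,L] is nonempty. -/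
noncomputable section

/-- A control on the simplex of `[0,T]`: vanishing on the diagonal, nonnegative
and super-additive. -/
def IsControl (T : ℝ) (ω : ℝ → ℝ → ℝ) : Prop :=
  (∀ s t, 0 ≤ s → s ≤ t → t ≤ T → 0 ≤ ω s t) ∧
  (∀ s, 0 ≤ s → s ≤ T → ω s s = 0) ∧
  (∀ r s t, 0 ≤ r → r ≤ s → s ≤ t → t ≤ T → ω r s + ω s t ≤ ω r t)

/-- The global hypotheses on the data `T`, `κ`, `δ`, `ϖ`. -/
def GoodParams (T κ : ℝ) (δ ϖ : ℝ → ℝ) : Prop :=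
  0 < T ∧ 0 < κ ∧ κ < 1 ∧
  (∀ x y, 0 ≤ x → x ≤ y → δ x ≤ δ y) ∧
  (∀ x y, 0 ≤ x → x ≤ y → ϖ x ≤ ϖ y) ∧
  δ 0 = 0 ∧ ϖ 0 = 0 ∧
  (∀ x, 0 ≤ x → 2 * ϖ (x / 2) ≤ κ * ϖ x) ∧
  κ + 2 * δ T < 1

variable {V : Type*} [NormedAddCommGroup V] [NormedSpace ℝ V]

/-- `χ` is of class `𝒪` with constant `C`:
`osc (χ t s, L * ϖ (ω r s)) ≤ C * δT * (1 + L) * ϖ (ω r t)`. -/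
def ClassO (T : ℝ) (ω : ℝ → ℝ → ℝ) (ϖ : ℝ → ℝ) (δT C : ℝ)
    (χ : ℝ → ℝ → V → V) : Prop :=
  ∀ r s t, 0 ≤ r → r ≤ s → s ≤ t → t ≤ T → ∀ L, 0 ≤ L → ∀ a b : V,
    ‖a - b‖ ≤ L * ϖ (ω r s) →
      ‖χ t s a - χ t s b‖ ≤ C * δT * (1 + L) * ϖ (ω r t)

/-- An almost flow `φ ∈ 𝒜[δ, M]`. -/
def AlmostFlow (T : ℝ) (ω : ℝ → ℝ → ℝ) (δ ϖ : ℝ → ℝ) (M : ℝ)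
    (φ : ℝ → ℝ → V → V) : Prop :=
  (∀ s t, 0 ≤ s → s ≤ t → t ≤ T → Continuous (φ t s)) ∧
  ClassO T ω ϖ (δ T) 1 (fun t s a => φ t s a - a) ∧
  (∀ s t, 0 ≤ s → s ≤ t → t ≤ T → ∀ a : V, ‖φ t s a - a‖ ≤ δ (t - s)) ∧
  (∀ r s t, 0 ≤ r → r ≤ s → s ≤ t → t ≤ T → ∀ a : V,
    ‖φ t s (φ s r a) - φ t r a‖ ≤ M * ϖ (ω r t))

/-- A partition `0 = t 0 < t 1 < ⋯ < t n = T` of `[0, T]`. -/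
def IsPartition (T : ℝ) (n : ℕ) (t : ℕ → ℝ) : Prop :=
  t 0 = 0 ∧ t n = T ∧ ∀ k, k < n → t k < t (k + 1)

/-- `y ∈ 𝒫_π[φ, a, K]`: a discrete D-solution on the partition `t` with constant `K`. -/
def DiscreteDSol (ϖ : ℝ → ℝ) (ω : ℝ → ℝ → ℝ) (φ : ℝ → ℝ → V → V)
    (n : ℕ) (t : ℕ → ℝ) (a : V) (K : ℝ) (y : ℕ → V) : Prop :=
  y 0 = a ∧ ∀ i j, i ≤ j → j ≤ n →
    ‖y j - φ (t j) (t i) (y i)‖ ≤ K * ϖ (ω (t i) (t j))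

/-- The numerical scheme of `φ` on the partition `t` started at `a`. -/
def NumScheme (φ : ℝ → ℝ → V → V) (n : ℕ) (t : ℕ → ℝ) (a : V) (y : ℕ → V) : Prop :=
  y 0 = a ∧ ∀ k, k < n → y (k + 1) = φ (t (k + 1)) (t k) (y k)

/-- `y ∈ 𝒫[φ, a, K]`: a (continuous-time) D-solution with constant `K`. -/
def DSol (T : ℝ) (ϖ : ℝ → ℝ) (ω : ℝ → ℝ → ℝ) (φ : ℝ → ℝ → V → V)
    (a : V) (K : ℝ) (y : ℝ → V) : Prop :=
  ContinuousOn y (Set.Icc 0 T) ∧ y 0 = a ∧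
  ∀ s t, 0 ≤ s → s ≤ t → t ≤ T → ‖y t - φ t s (y s)‖ ≤ K * ϖ (ω s t)

/-- The discrete functional `Φ^π_{i,j}(y) = ∑_{k=i}^{j-1} φ̂_{t_{k+1}, t_k}(y_k)`. -/
def PhiSum (φ : ℝ → ℝ → V → V) (t : ℕ → ℝ) (y : ℕ → V) (i j : ℕ) : V :=
  ∑ k ∈ Finset.Ico i j, (φ (t (k + 1)) (t k) (y k) - y k)

/-- A stable almost flow, with Lipschitz-ratio bound `dφLip` for `dφ` and
4-point control data `φCheck`, `φStar`. -/
def StableAlmostFlow (T : ℝ) (ω : ℝ → ℝ → ℝ) (δ ϖ : ℝ → ℝ) (M : ℝ)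
    (φ : ℝ → ℝ → V → V) (dφLip : ℝ) (φCheck : ℝ → ℝ → ℝ → ℝ) (φStar : ℝ → ℝ) :
    Prop :=
  AlmostFlow T ω δ ϖ M φ ∧
  (∀ s t, 0 ≤ s → s ≤ t → t ≤ T → ∀ a b : V,
    ‖(φ t s a - a) - (φ t s b - b)‖ ≤ δ T * ‖a - b‖) ∧
  (∀ r s t, 0 ≤ r → r ≤ s → s ≤ t → t ≤ T → ∀ a b : V,
    ‖(φ t s (φ s r a) - φ t r a) - (φ t s (φ s r b) - φ t r b)‖ ≤
      dφLip * ϖ (ω r t) * ‖a - b‖) ∧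
  (∀ s t, 0 ≤ s → s ≤ t → t ≤ T → ∀ a b c d : V,
    ‖φ t s a - φ t s b - φ t s c + φ t s d‖ ≤
      φCheck t s (max ‖a - b‖ ‖c - d‖) * max ‖a - c‖ ‖b - d‖ +
        (1 + δ T) * ‖a - b - c + d‖) ∧
  (∀ α, 0 ≤ α → ∀ r s t, 0 ≤ r → r ≤ s → s ≤ t → t ≤ T →
    φCheck t s (α * ϖ (ω r s)) ≤ φStar α * ϖ (ω r t))

/-- `d_𝒜(φ, ψ) ≤ ε`: all three components of the distance `d_𝒜` are at most `ε`. -/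
def dAle (T : ℝ) (ω : ℝ → ℝ → ℝ) (δ ϖ : ℝ → ℝ)
    (φ ψ : ℝ → ℝ → V → V) (ε : ℝ) : Prop :=
  (∀ s t, 0 ≤ s → s ≤ t → t ≤ T → ∀ a : V, ‖φ t s a - ψ t s a‖ ≤ ε) ∧
  ClassO T ω ϖ (δ T) ε (fun t s a => φ t s a - ψ t s a) ∧
  (∀ r s t, 0 ≤ r → r ≤ s → s ≤ t → t ≤ T → ∀ a : V,
    ‖(φ t s (φ s r a) - φ t r a) - (ψ t s (ψ s r a) - ψ t r a)‖ ≤ ε * ϖ (ω r t))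

/-- The numerical scheme of an almost flow `φ ∈ 𝒜[δ,M]` on a partition,
started at `a`, is a discrete D-solution with the constant
`L = 2(δ(T) + M)/(1 - κ - 2δ(T))`; in particular `𝒫_π[φ,a,L]` is nonempty. -/
theorem stmt_0 {V : Type*} [NormedAddCommGroup V] [NormedSpace ℝ V]
    (T κ M : ℝ) (δ ϖ : ℝ → ℝ) (ω : ℝ → ℝ → ℝ)
    (hparams : GoodParams T κ δ ϖ) (hω : IsControl T ω) (hM : 0 ≤ M)
    (φ : ℝ → ℝ → V → V) (hφ : AlmostFlow T ω δ ϖ M φ)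
    (n : ℕ) (t : ℕ → ℝ) (hπ : IsPartition T n t)
    (a : V) (y : ℕ → V) (hy : NumScheme φ n t a y) :
    DiscreteDSol ϖ ω φ n t a (2 * (δ T + M) / (1 - κ - 2 * δ T)) y ∧
      ∃ z : ℕ → V, DiscreteDSol ϖ ω φ n t a (2 * (δ T + M) / (1 - κ - 2 * δ T)) z := by
  obtain ⟨hT, hκ0, hκ1, hδmono, hϖmono, hδ0, hϖ0, hϖhalf, hsmall⟩ := hparams
  obtain ⟨hω0, hωdiag, hωsuper⟩ := hω
  obtain ⟨_hcont, hclassO, hδbd, hflow⟩ := hφ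
  obtain ⟨ht0, htn, htlt⟩ := hπ
  obtain ⟨hy0, hystep⟩ := hy
  classical
  set D := δ T with hD
  set K := 2 * (D + M) / (1 - κ - 2 * D) with hKdef
  have hD0 : 0 ≤ D := by
    have := hδmono 0 T le_rfl hT.le
    simpa [hδ0, hD] using this
  have hden : 0 < 1 - κ - 2 * D := by linarith
  have hK0 : 0 ≤ K := div_nonneg (by linarith) hden.le
  have hKiden : K * (1 - κ - 2 * D) = 2 * (D + M) := div_mul_cancel₀ _ hden.ne'
  have hKD : (0:ℝ) ≤ K * D := mul_nonneg hK0 hD0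
  have hkey : K * κ + D * (1 + K) + 2 * M ≤ K := by nlinarith [hKiden, hKD, hD0]
  have htmono : ∀ i j : ℕ, i ≤ j → j ≤ n → t i ≤ t j := by
    intro i j hij
    induction j, hij using Nat.le_induction with
    | base => intro _; exact le_rfl
    | succ m hm ih =>
      intro hmn
      exact le_trans (ih (by omega)) (htlt m (by omega)).le
  have ht0k : ∀ k, k ≤ n → 0 ≤ t k := fun k hk => ht0 ▸ htmono 0 k (Nat.zero_le k) hk
  have htkT : ∀ k, k ≤ n → t k ≤ T := fun k hk => htn ▸ htmono k n hk le_rfl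
  have hϖnn : ∀ x : ℝ, 0 ≤ x → 0 ≤ ϖ x := fun x hx => hϖ0 ▸ hϖmono 0 x le_rfl hx
  have hid : ∀ s, 0 ≤ s → s ≤ T → ∀ a : V, φ s s a = a := by
    intro s hs0 hsT a
    have h := hδbd s s hs0 le_rfl hsT a
    rw [sub_self, hδ0] at h
    have h0 : ‖φ s s a - a‖ = 0 := le_antisymm h (norm_nonneg _)
    exact sub_eq_zero.mp (norm_eq_zero.mp h0)
  have key : ∀ d i j : ℕ, i ≤ j → j ≤ n → j - i = d →
      ‖y j - φ (t j) (t i) (y i)‖ ≤ K * ϖ (ω (t i) (t j)) := by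
    intro d
    induction d using Nat.strong_induction_on with
    | _ d ih =>
      intro i j hij hjn hd
      have hin : i ≤ n := le_trans hij hjn
      have hti0 : 0 ≤ t i := ht0k i hin
      have htiT : t i ≤ T := htkT i hin
      have htj0 : 0 ≤ t j := ht0k j hjn
      have htjT : t j ≤ T := htkT j hjn
      have htij : t i ≤ t j := htmono i j hij hjn
      have hW0 : 0 ≤ ω (t i) (t j) := hω0 _ _ hti0 htij htjT
      have hϖW0 : 0 ≤ ϖ (ω (t i) (t j)) := hϖnn _ hW0
      rcases Nat.lt_or_ge d 2 with hd2 | hd2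
      · interval_cases d
        · have hji : i = j := by omega
          subst hji
          rw [hid (t i) hti0 htiT, sub_self, norm_zero]
          exact mul_nonneg hK0 hϖW0
        · have hji : j = i + 1 := by omega
          subst hji
          rw [hystep i (by omega), sub_self, norm_zero]
          exact mul_nonneg hK0 hϖW0
      · set W := ω (t i) (t j) with hWdef
        set k := Nat.findGreatest (fun m => ω (t i) (t m) ≤ W / 2) (j - 1) with hkdef
        have hPi : (fun m => ω (t i) (t m) ≤ W / 2) i := by
          simp only
          rw [hωdiag (t i) hti0 htiT]
          linarith
        have hik : i ≤ k := by
          rw [hkdef]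
          exact Nat.le_findGreatest (P := fun m => ω (t i) (t m) ≤ W / 2) (m := i) (n := j - 1) (by omega) hPi
        have hkj1 : k ≤ j - 1 := by
          rw [hkdef]; exact Nat.findGreatest_le _
        have hkj : k < j := by omega
        have hkn : k ≤ n := by omega
        have hk1n : k + 1 ≤ n := by omega
        have hPk : ω (t i) (t k) ≤ W / 2 := by
          conv_lhs => rw [show t k = t (Nat.findGreatest (fun m => ω (t i) (t m) ≤ W / 2) (j - 1)) from by rw [← hkdef]]
          exact Nat.findGreatest_spec (P := fun m => ω (t i) (t m) ≤ W / 2) (m := i) (n := j - 1) (by omega) hPi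
        -- times
        have htk0 : 0 ≤ t k := ht0k k hkn
        have htkT' : t k ≤ T := htkT k hkn
        have htk10 : 0 ≤ t (k+1) := ht0k (k+1) hk1n
        have htik : t i ≤ t k := htmono i k hik hkn
        have htkk1 : t k ≤ t (k+1) := (htlt k (by omega)).le
        have htk1j : t (k+1) ≤ t j := htmono (k+1) j (by omega) hjn
        have htkj' : t k ≤ t j := le_trans htkk1 htk1j
        -- right half
        have hright : ω (t (k+1)) (t j) ≤ W / 2 := by
          rcases eq_or_lt_of_le (show k + 1 ≤ j by omega) with he | hlt
          · rw [he, hωdiag (t j) htj0 htjT]; linarith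
          · have hnP := Nat.findGreatest_is_greatest
              (P := fun m => ω (t i) (t m) ≤ W / 2) (n := j - 1) (k := k + 1)
              (by omega) (by omega)
            simp only [not_le] at hnP
            have h2 := hωsuper (t i) (t (k+1)) (t j) hti0 (le_trans htik htkk1) htk1j htjT
            linarith
        have hW20 : (0:ℝ) ≤ W / 2 := by linarith
        -- induction hypotheses
        have hA : ‖y j - φ (t j) (t (k+1)) (y (k+1))‖ ≤ K * ϖ (ω (t (k+1)) (t j)) :=
          ih (j - (k+1)) (by omega) (k+1) j (by omega) hjn rfl
        have hab : ‖y k - φ (t k) (t i) (y i)‖ ≤ K * ϖ (ω (t i) (t k)) :=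
          ih (k - i) (by omega) i k hik hkn rfl
        -- class O bound
        have hCO := hclassO (t i) (t k) (t j) hti0 htik htkj' htjT K hK0
          (y k) (φ (t k) (t i) (y i)) hab
        simp only at hCO
        -- flow bounds
        have hB := hflow (t k) (t (k+1)) (t j) htk0 htkk1 htk1j htjT (y k)
        have hDd := hflow (t i) (t k) (t j) hti0 htik htkj' htjT (y i)
        -- triangle decomposition
        have hyk1 : y (k+1) = φ (t (k+1)) (t k) (y k) := hystep k (by omega)
        have tri : ‖y j - φ (t j) (t i) (y i)‖ ≤
            ‖y j - φ (t j) (t (k+1)) (y (k+1))‖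
            + ‖φ (t j) (t (k+1)) (φ (t (k+1)) (t k) (y k)) - φ (t j) (t k) (y k)‖
            + ‖φ (t j) (t k) (y k) - φ (t j) (t k) (φ (t k) (t i) (y i))‖
            + ‖φ (t j) (t k) (φ (t k) (t i) (y i)) - φ (t j) (t i) (y i)‖ := by
          rw [hyk1]
          calc ‖y j - φ (t j) (t i) (y i)‖
              = ‖(y j - φ (t j) (t (k+1)) (φ (t (k+1)) (t k) (y k)))
                + (φ (t j) (t (k+1)) (φ (t (k+1)) (t k) (y k)) - φ (t j) (t k) (y k))
                + (φ (t j) (t k) (y k) - φ (t j) (t k) (φ (t k) (t i) (y i)))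
                + (φ (t j) (t k) (φ (t k) (t i) (y i)) - φ (t j) (t i) (y i))‖ := by
                congr 1; abel
            _ ≤ _ := le_trans (norm_add_le _ _) (by gcongr; exact norm_add₃_le)
        -- middle term split
        have hC : ‖φ (t j) (t k) (y k) - φ (t j) (t k) (φ (t k) (t i) (y i))‖ ≤
            ‖y k - φ (t k) (t i) (y i)‖
            + ‖(φ (t j) (t k) (y k) - y k)
                - (φ (t j) (t k) (φ (t k) (t i) (y i)) - φ (t k) (t i) (y i))‖ := by
          have hre : φ (t j) (t k) (y k) - φ (t j) (t k) (φ (t k) (t i) (y i)) =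
              (y k - φ (t k) (t i) (y i))
              + ((φ (t j) (t k) (y k) - y k)
                - (φ (t j) (t k) (φ (t k) (t i) (y i)) - φ (t k) (t i) (y i))) := by abel
          rw [hre]
          exact norm_add_le _ _
        -- monotone ω / ϖ facts
        have hωik0 : 0 ≤ ω (t i) (t k) := hω0 _ _ hti0 htik htkT'
        have hωk1j0 : 0 ≤ ω (t (k+1)) (t j) := hω0 _ _ htk10 htk1j htjT
        have hωkj0 : 0 ≤ ω (t k) (t j) := hω0 _ _ htk0 htkj' htjT
        have hωkjW : ω (t k) (t j) ≤ W := by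
          have := hωsuper (t i) (t k) (t j) hti0 htik htkj' htjT
          linarith
        have hm1 : K * ϖ (ω (t (k+1)) (t j)) ≤ K * ϖ (W / 2) :=
          mul_le_mul_of_nonneg_left (hϖmono _ _ hωk1j0 hright) hK0
        have hm2 : K * ϖ (ω (t i) (t k)) ≤ K * ϖ (W / 2) :=
          mul_le_mul_of_nonneg_left (hϖmono _ _ hωik0 hPk) hK0
        have hm3 : M * ϖ (ω (t k) (t j)) ≤ M * ϖ W :=
          mul_le_mul_of_nonneg_left (hϖmono _ _ hωkj0 hωkjW) hM
        have hhalfK : K * (2 * ϖ (W / 2)) ≤ K * (κ * ϖ W) :=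
          mul_le_mul_of_nonneg_left (hϖhalf W hW0) hK0
        have hfin : (K * κ + D * (1 + K) + 2 * M) * ϖ W ≤ K * ϖ W :=
          mul_le_mul_of_nonneg_right hkey hϖW0
        linarith [hA, hB, hDd, hCO, hab, tri, hC]
  refine ⟨⟨hy0, fun i j hij hjn => key (j - i) i j hij hjn rfl⟩,
    ⟨y, hy0, fun i j hij hjn => key (j - i) i j hij hjn rfl⟩⟩
end
end

section
/- Let φ ∈ A[δ,M] be an almost flow such that the map (s,t,b) ↦ φ_{t,s}(b) is jointly continuous on 𝕋²₊ × V, and assume ω and ϖ are continuous. Let K ≥ 0, a ∈ V, let (π_n) be a sequence of partitions of [0,T] with mesh(π_n) → 0, let y^n ∈ P_{π_n}[φ,a,K] for each n, and let ŷ^n: [0,T] → V denote the piecewise-linear interpolation of y^n. If ŷ^n converges uniformly on [0,T] to a path y, then y ∈ P[φ,a,K]. -/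
noncomputable section

variable {V : Type*} [NormedAddCommGroup V] [NormedSpace ℝ V]

/-! Sample the discrete solutions at the last partition points `t_i ≤ s` and `t_j ≤ u`. As the
mesh goes to zero these times tend to `s` and `u`, and since the interpolations converge
uniformly to the continuous limit `z`, the sampled values `y_i`, `y_j` tend to `z s`, `z u`. The
discrete bound `‖y_j - φ_{t_j,t_i}(y_i)‖ ≤ K ϖ(ω(t_i,t_j))` is a closed condition by the joint
continuity of `φ`, `ω` and `ϖ`, so it survives the limit. -/

open Set Filter Topology

def IsPiecewiseLinearInterpolation (n : ℕ) (t : ℕ → ℝ) (y : ℕ → V) (Y : ℝ → V) : Prop :=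
  ∀ k < n, ∀ u ∈ Icc (t k) (t (k + 1)),
    Y u = y k + ((u - t k) / (t (k + 1) - t k)) • (y (k + 1) - y k)

/-- The largest index `k ≤ n` with `t k ≤ v` (or `0` if there is none). -/
def floorIndex (n : ℕ) (t : ℕ → ℝ) (v : ℝ) : ℕ :=
  Nat.findGreatest (fun k => t k ≤ v) n

section floorIndex

variable {n : ℕ} {t : ℕ → ℝ} {v w : ℝ}

theorem floorIndex_le : floorIndex n t v ≤ n :=
  Nat.findGreatest_le n

theorem floorIndex_mono (hvw : v ≤ w) : floorIndex n t v ≤ floorIndex n t w :=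
  Nat.findGreatest_mono_left (fun _ hk => hk.trans hvw) n

end floorIndex

namespace IsPartition

variable {T : ℝ} {n : ℕ} {t : ℕ → ℝ}

theorem strictMonoOn (h : IsPartition T n t) : StrictMonoOn t (Iic n) :=
  strictMonoOn_Iic_of_lt_succ fun k hk => by simpa using h.2.2 k hk

theorem mem_Icc (h : IsPartition T n t) {k : ℕ} (hk : k ≤ n) : t k ∈ Icc 0 T := by
  constructor
  · simpa [h.1] using h.strictMonoOn.monotoneOn (Nat.zero_le n) hk (Nat.zero_le k)
  · simpa [h.2.1] using h.strictMonoOn.monotoneOn hk (le_refl n) hk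

theorem ne_zero (h : IsPartition T n t) (hT : 0 < T) : n ≠ 0 := by
  rintro rfl
  linarith [h.1, h.2.1]

theorem apply_floorIndex_le (h : IsPartition T n t) {v : ℝ} (hv : 0 ≤ v) :
    t (floorIndex n t v) ≤ v :=
  Nat.findGreatest_spec (P := fun k => t k ≤ v) (Nat.zero_le n) (by rwa [h.1])

theorem sub_apply_floorIndex_le (h : IsPartition T n t) {θ : ℝ} (hθ : 0 ≤ θ)
    (hmesh : ∀ k < n, t (k + 1) - t k ≤ θ) {v : ℝ} (hv : v ∈ Icc 0 T) :
    v - t (floorIndex n t v) ≤ θ := by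
  rcases floorIndex_le.lt_or_eq with hlt | heq
  · have hnext : v < t (floorIndex n t v + 1) :=
      not_le.1 (Nat.findGreatest_is_greatest (Nat.lt_succ_self _) hlt)
    linarith [hmesh _ hlt]
  · have : t (floorIndex n t v) = T := by rw [heq, h.2.1]
    linarith [hv.2]

end IsPartition

theorem tendsto_apply_floorIndex {T : ℝ} {N : ℕ → ℕ} {t : ℕ → ℕ → ℝ}
    (hpart : ∀ m, IsPartition T (N m) (t m))
    (hmesh : ∀ ε > (0:ℝ), ∃ m₀, ∀ m ≥ m₀, ∀ k < N m, t m (k + 1) - t m k ≤ ε)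
    {v : ℝ} (hv : v ∈ Icc 0 T) :
    Tendsto (fun m => t m (floorIndex (N m) (t m) v)) atTop (𝓝[Icc 0 T] v) := by
  refine tendsto_nhdsWithin_iff.2 ⟨Metric.tendsto_atTop.2 fun ε hε => ?_,
    Eventually.of_forall fun m => (hpart m).mem_Icc floorIndex_le⟩
  obtain ⟨m₀, hm₀⟩ := hmesh (ε / 2) (half_pos hε)
  refine ⟨m₀, fun m hm => ?_⟩
  have hle := (hpart m).apply_floorIndex_le (v := v) hv.1
  have hclose := (hpart m).sub_apply_floorIndex_le (half_pos hε).le (hm₀ m hm) hv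
  rw [Real.dist_eq, abs_of_nonpos (by linarith)]
  linarith

namespace IsPiecewiseLinearInterpolation

variable {T : ℝ} {n : ℕ} {t : ℕ → ℝ} {y : ℕ → V} {Y : ℝ → V}

theorem apply_partition (hY : IsPiecewiseLinearInterpolation n t y Y)
    (h : IsPartition T n t) (hT : 0 < T) {k : ℕ} (hk : k ≤ n) : Y (t k) = y k := by
  rcases hk.lt_or_eq with hlt | rfl
  · simpa using hY k hlt (t k) ⟨le_rfl, (h.2.2 k hlt).le⟩
  · obtain ⟨j, rfl⟩ := Nat.exists_eq_succ_of_ne_zero (h.ne_zero hT)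
    have hlt := h.2.2 j (Nat.lt_succ_self j)
    rw [hY j (Nat.lt_succ_self j) _ ⟨hlt.le, le_rfl⟩, div_self (sub_ne_zero.2 hlt.ne'), one_smul,
      add_sub_cancel]

theorem continuousOn (hY : IsPiecewiseLinearInterpolation n t y Y) (h : IsPartition T n t) :
    ContinuousOn Y (Icc 0 T) := by
  suffices ∀ k ≤ n, ContinuousOn Y (Icc (t 0) (t k)) by
    simpa [h.1, h.2.1] using this n le_rfl
  intro k hk
  induction k with
  | zero => simp
  | succ k ih =>
    have hlt : k < n := hk
    have hpiece : ContinuousOn Y (Icc (t k) (t (k + 1))) :=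
      (Continuous.continuousOn (by fun_prop)).congr (hY k hlt)
    rw [← Icc_union_Icc_eq_Icc (h.strictMonoOn.monotoneOn (Nat.zero_le n) hlt.le (Nat.zero_le k))
      (h.2.2 k hlt).le]
    exact (ih hlt.le).union_of_isClosed hpiece isClosed_Icc isClosed_Icc

end IsPiecewiseLinearInterpolation

theorem tendstoUniformlyOn_of_forall_norm_sub_le {α E : Type*} [SeminormedAddCommGroup E]
    {F : ℕ → α → E} {f : α → E} {s : Set α}
    (h : ∀ ε > (0:ℝ), ∃ m₀, ∀ m ≥ m₀, ∀ u ∈ s, ‖F m u - f u‖ ≤ ε) :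
    TendstoUniformlyOn F f atTop s := by
  refine Metric.tendstoUniformlyOn_iff.2 fun ε hε => ?_
  obtain ⟨m₀, hm₀⟩ := h (ε / 2) (half_pos hε)
  refine eventually_atTop.2 ⟨m₀, fun m hm u hu => ?_⟩
  rw [dist_eq_norm']
  linarith [hm₀ m hm u hu]

theorem tendsto_apply_floorIndex_of_tendstoUniformlyOn {T : ℝ} (hT : 0 < T) {N : ℕ → ℕ}
    {t : ℕ → ℕ → ℝ} (hpart : ∀ m, IsPartition T (N m) (t m))
    (hmesh : ∀ ε > (0:ℝ), ∃ m₀, ∀ m ≥ m₀, ∀ k < N m, t m (k + 1) - t m k ≤ ε)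
    {y : ℕ → ℕ → V} {Y : ℕ → ℝ → V}
    (hY : ∀ m, IsPiecewiseLinearInterpolation (N m) (t m) (y m) (Y m)) {z : ℝ → V}
    (hunif : TendstoUniformlyOn Y z atTop (Icc 0 T)) (hz : ContinuousOn z (Icc 0 T))
    {v : ℝ} (hv : v ∈ Icc 0 T) :
    Tendsto (fun m => y m (floorIndex (N m) (t m) v)) atTop (𝓝 (z v)) :=
  (hunif.tendsto_comp (hz v hv) (tendsto_apply_floorIndex hpart hmesh hv)).congr fun m =>
    (hY m).apply_partition (hpart m) hT floorIndex_le

theorem stmt_3_general {V : Type*} [NormedAddCommGroup V] [NormedSpace ℝ V]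
    (T κ : ℝ) (δ ϖ : ℝ → ℝ) (ω : ℝ → ℝ → ℝ)
    (hparams : GoodParams T κ δ ϖ) (hω : IsControl T ω)
    (φ : ℝ → ℝ → V → V)
    (hφcont : ContinuousOn (fun p : ℝ × ℝ × V => φ p.2.1 p.1 p.2.2)
      {p : ℝ × ℝ × V | 0 ≤ p.1 ∧ p.1 ≤ p.2.1 ∧ p.2.1 ≤ T})
    (hωcont : ContinuousOn (fun p : ℝ × ℝ => ω p.1 p.2)
      {p : ℝ × ℝ | 0 ≤ p.1 ∧ p.1 ≤ p.2 ∧ p.2 ≤ T})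
    (hϖcont : ContinuousOn ϖ (Set.Ici 0))
    (K : ℝ) (a : V)
    (N : ℕ → ℕ) (t : ℕ → ℕ → ℝ) (hpart : ∀ m, IsPartition T (N m) (t m))
    (hmesh : ∀ ε > (0:ℝ), ∃ m₀, ∀ m ≥ m₀, ∀ k < N m, t m (k + 1) - t m k ≤ ε)
    (y : ℕ → ℕ → V) (hy : ∀ m, DiscreteDSol ϖ ω φ (N m) (t m) a K (y m))
    (Y : ℕ → ℝ → V)
    (hY : ∀ m, ∀ k < N m, ∀ u ∈ Set.Icc (t m k) (t m (k + 1)),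
      Y m u = y m k + ((u - t m k) / (t m (k + 1) - t m k)) • (y m (k + 1) - y m k))
    (z : ℝ → V)
    (hconv : ∀ ε > (0:ℝ), ∃ m₀, ∀ m ≥ m₀, ∀ u ∈ Set.Icc (0:ℝ) T, ‖Y m u - z u‖ ≤ ε) :
    DSol T ϖ ω φ a K z := by
  have hT : 0 < T := hparams.1
  have hinterp : ∀ m, IsPiecewiseLinearInterpolation (N m) (t m) (y m) (Y m) := hY
  have hunif : TendstoUniformlyOn Y z atTop (Icc 0 T) :=
    tendstoUniformlyOn_of_forall_norm_sub_le hconv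
  have hz : ContinuousOn z (Icc 0 T) :=
    hunif.continuousOn (Frequently.of_forall fun m => (hinterp m).continuousOn (hpart m))
  refine ⟨hz, ?_, fun s u hs hsu huT => ?_⟩
  · have hY0 : ∀ m, Y m 0 = a := fun m => by
      rw [← (hpart m).1, (hinterp m).apply_partition (hpart m) hT (Nat.zero_le _), (hy m).1]
    exact tendsto_nhds_unique (hunif.tendsto_at ⟨le_rfl, hT.le⟩) (by simp [hY0])
  set i := fun m => floorIndex (N m) (t m) s
  set j := fun m => floorIndex (N m) (t m) u
  have hs' : s ∈ Icc 0 T := ⟨hs, hsu.trans huT⟩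
  have hu' : u ∈ Icc 0 T := ⟨hs.trans hsu, huT⟩
  have hti := (tendsto_nhdsWithin_iff.1 (tendsto_apply_floorIndex hpart hmesh hs')).1
  have htj := (tendsto_nhdsWithin_iff.1 (tendsto_apply_floorIndex hpart hmesh hu')).1
  have hyi := tendsto_apply_floorIndex_of_tendstoUniformlyOn hT hpart hmesh hinterp hunif hz hs'
  have hyj := tendsto_apply_floorIndex_of_tendstoUniformlyOn hT hpart hmesh hinterp hunif hz hu'
  have hsimplex : ∀ m, 0 ≤ t m (i m) ∧ t m (i m) ≤ t m (j m) ∧ t m (j m) ≤ T := fun m =>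
    ⟨((hpart m).mem_Icc floorIndex_le).1,
      (hpart m).strictMonoOn.monotoneOn floorIndex_le floorIndex_le (floorIndex_mono hsu),
      ((hpart m).mem_Icc floorIndex_le).2⟩
  have hφlim : Tendsto (fun m => φ (t m (j m)) (t m (i m)) (y m (i m))) atTop
      (𝓝 (φ u s (z s))) :=
    (hφcont _ ⟨hs, hsu, huT⟩).tendsto.comp <| tendsto_nhdsWithin_iff.2
      ⟨hti.prodMk_nhds (htj.prodMk_nhds hyi), Eventually.of_forall hsimplex⟩
  have hϖω : ContinuousOn (fun p : ℝ × ℝ => ϖ (ω p.1 p.2))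
      {p : ℝ × ℝ | 0 ≤ p.1 ∧ p.1 ≤ p.2 ∧ p.2 ≤ T} :=
    hϖcont.comp hωcont fun p hp => hω.1 p.1 p.2 hp.1 hp.2.1 hp.2.2
  have hϖωlim : Tendsto (fun m => ϖ (ω (t m (i m)) (t m (j m)))) atTop (𝓝 (ϖ (ω s u))) :=
    (hϖω _ ⟨hs, hsu, huT⟩).tendsto.comp <| tendsto_nhdsWithin_iff.2
      ⟨hti.prodMk_nhds htj, Eventually.of_forall hsimplex⟩
  exact le_of_tendsto_of_tendsto' (hyj.sub hφlim).norm (hϖωlim.const_mul K) fun m =>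
    (hy m).2 _ _ (floorIndex_mono hsu) floorIndex_le

/-- Convergence lemma: if discrete D-solutions `y^m ∈ 𝒫_{π_m}[φ,a,K]`
on partitions with mesh going to `0` have piecewise-linear interpolations converging
uniformly to a path `z`, then `z ∈ 𝒫[φ,a,K]`. -/
theorem stmt_3 {V : Type*} [NormedAddCommGroup V] [NormedSpace ℝ V]
    (T κ M : ℝ) (δ ϖ : ℝ → ℝ) (ω : ℝ → ℝ → ℝ)
    (hparams : GoodParams T κ δ ϖ) (hω : IsControl T ω) (hM : 0 ≤ M)
    (φ : ℝ → ℝ → V → V) (hφ : AlmostFlow T ω δ ϖ M φ)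
    (hφcont : ContinuousOn (fun p : ℝ × ℝ × V => φ p.2.1 p.1 p.2.2)
      {p : ℝ × ℝ × V | 0 ≤ p.1 ∧ p.1 ≤ p.2.1 ∧ p.2.1 ≤ T})
    (hωcont : ContinuousOn (fun p : ℝ × ℝ => ω p.1 p.2)
      {p : ℝ × ℝ | 0 ≤ p.1 ∧ p.1 ≤ p.2 ∧ p.2 ≤ T})
    (hϖcont : ContinuousOn ϖ (Set.Ici 0))
    (K : ℝ) (hK : 0 ≤ K) (a : V)
    (N : ℕ → ℕ) (t : ℕ → ℕ → ℝ) (hpart : ∀ m, IsPartition T (N m) (t m))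
    (hmesh : ∀ ε > (0:ℝ), ∃ m₀, ∀ m ≥ m₀, ∀ k < N m, t m (k + 1) - t m k ≤ ε)
    (y : ℕ → ℕ → V) (hy : ∀ m, DiscreteDSol ϖ ω φ (N m) (t m) a K (y m))
    (Y : ℕ → ℝ → V)
    (hY : ∀ m, ∀ k < N m, ∀ u ∈ Set.Icc (t m k) (t m (k + 1)),
      Y m u = y m k + ((u - t m k) / (t m (k + 1) - t m k)) • (y m (k + 1) - y m k))
    (z : ℝ → V)
    (hconv : ∀ ε > (0:ℝ), ∃ m₀, ∀ m ≥ m₀, ∀ u ∈ Set.Icc (0:ℝ) T, ‖Y m u - z u‖ ≤ ε) :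
    DSol T ϖ ω φ a K z :=
  stmt_3_general T κ δ ϖ ω hparams hω φ hφcont hωcont hϖcont K a N t hpart hmesh y hy Y hY z hconv
end
end

section
/- Let K, M ≥ 0. For each n ∈ ℕ let φ^n ∈ A[δ,M] be an almost flow, a^n ∈ V, and y^n ∈ P[φ^n, a^n, K] a D-solution. Let φ ∈ A[δ,M], a ∈ V and y: [0,T] → V continuous. If d_∞(φ^n,φ) + ‖a^n − a‖ + sup_{t∈[0,T]} ‖y^n_t − y_t‖ → 0 as n → ∞, where d_∞(φ,ψ) := sup_{(s,t)∈𝕋²₊} sup_{a∈V} ‖φ_{t,s}(a) − ψ_{t,s}(a)‖, then y ∈ P[φ,a,K]. -/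
noncomputable section

variable {V : Type*} [NormedAddCommGroup V] [NormedSpace ℝ V]

/-- Convergence II: if `φⁿ ∈ 𝒜[δ,M]`, `yⁿ ∈ 𝒫[φⁿ,aⁿ,K]` and
`d_∞(φⁿ,φ) + ‖aⁿ - a‖ + ‖yⁿ - y‖_∞ → 0` with `φ ∈ 𝒜[δ,M]` and `y` continuous,
then `y ∈ 𝒫[φ,a,K]`. -/
theorem stmt_4 {V : Type*} [NormedAddCommGroup V] [NormedSpace ℝ V]
    (T κ M K : ℝ) (δ ϖ : ℝ → ℝ) (ω : ℝ → ℝ → ℝ)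
    (hparams : GoodParams T κ δ ϖ) (hω : IsControl T ω) (hM : 0 ≤ M) (hK : 0 ≤ K)
    (φn : ℕ → ℝ → ℝ → V → V) (hφn : ∀ n, AlmostFlow T ω δ ϖ M (φn n))
    (an : ℕ → V) (yn : ℕ → ℝ → V) (hyn : ∀ n, DSol T ϖ ω (φn n) (an n) K (yn n))
    (φ : ℝ → ℝ → V → V) (hφ : AlmostFlow T ω δ ϖ M φ)
    (a : V) (y : ℝ → V) (hycont : ContinuousOn y (Set.Icc 0 T))
    (hconv : ∀ ε > (0:ℝ), ∃ n₀, ∀ n ≥ n₀,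
      (∀ s t, 0 ≤ s → s ≤ t → t ≤ T → ∀ b : V, ‖φn n t s b - φ t s b‖ ≤ ε) ∧
      ‖an n - a‖ ≤ ε ∧ ∀ u ∈ Set.Icc (0:ℝ) T, ‖yn n u - y u‖ ≤ ε) :
    DSol T ϖ ω φ a K y := by
  obtain ⟨hT, -⟩ := hparams
  have hT0 : (0:ℝ) ≤ T := hT.le
  have hy0 : y 0 = a := by
    rw [← sub_eq_zero, ← norm_le_zero_iff]
    refine le_of_forall_pos_le_add fun ε hε => ?_
    obtain ⟨n₀, hn⟩ := hconv (ε/2) (by positivity)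
    obtain ⟨h1, h2, h3⟩ := hn n₀ le_rfl
    have hy0n : yn n₀ 0 = an n₀ := (hyn n₀).2.1
    have t1 : ‖y 0 - a‖ ≤ ‖y 0 - yn n₀ 0‖ + ‖yn n₀ 0 - a‖ := by
      simpa [dist_eq_norm] using dist_triangle (y 0) (yn n₀ 0) a
    have t2 : ‖y 0 - yn n₀ 0‖ ≤ ε/2 := by
      rw [norm_sub_rev]; exact h3 0 ⟨le_rfl, hT0⟩
    have t3 : ‖yn n₀ 0 - a‖ ≤ ε/2 := by rw [hy0n]; exact h2
    linarith
  refine ⟨hycont, hy0, fun s t hs hst htT => ?_⟩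
  refine le_of_forall_pos_le_add fun ε hε => ?_
  -- continuity of φ t s at y s
  have hcont := (hφ.1 s t hs hst htT).continuousAt (x := y s)
  rw [Metric.continuousAt_iff] at hcont
  obtain ⟨η, hη, hmod⟩ := hcont (ε/4) (by positivity)
  obtain ⟨n₀, hn⟩ := hconv (min (ε/4) (η/2)) (by positivity)
  obtain ⟨h1, h2, h3⟩ := hn n₀ le_rfl
  have hsIcc : s ∈ Set.Icc (0:ℝ) T := ⟨hs, hst.trans htT⟩
  have htIcc : t ∈ Set.Icc (0:ℝ) T := ⟨hs.trans hst, htT⟩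
  have hdsol := (hyn n₀).2.2 s t hs hst htT
  have e1 : ‖y t - yn n₀ t‖ ≤ ε/4 := by
    rw [norm_sub_rev]
    exact (h3 t htIcc).trans (min_le_left _ _)
  have e2 : ‖φn n₀ t s (yn n₀ s) - φ t s (yn n₀ s)‖ ≤ ε/4 :=
    (h1 s t hs hst htT _).trans (min_le_left _ _)
  have e3 : ‖φ t s (yn n₀ s) - φ t s (y s)‖ ≤ ε/4 := by
    have hd : dist (yn n₀ s) (y s) < η := by
      have := h3 s hsIcc
      rw [dist_eq_norm]
      calc ‖yn n₀ s - y s‖ ≤ min (ε/4) (η/2) := this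
        _ ≤ η/2 := min_le_right _ _
        _ < η := by linarith
    have := hmod hd
    rw [dist_eq_norm] at this
    exact this.le
  have tri : ‖y t - φ t s (y s)‖ ≤ ‖y t - yn n₀ t‖ + ‖yn n₀ t - φn n₀ t s (yn n₀ s)‖
      + ‖φn n₀ t s (yn n₀ s) - φ t s (yn n₀ s)‖ + ‖φ t s (yn n₀ s) - φ t s (y s)‖ := by
    have d1 := dist_triangle4 (y t) (yn n₀ t) (φn n₀ t s (yn n₀ s)) (φ t s (yn n₀ s))
    have d2 := dist_triangle (y t) (φ t s (yn n₀ s)) (φ t s (y s))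
    simp only [dist_eq_norm] at d1 d2
    linarith
  linarith
end
end

section
/- Let φ ∈ A[δ,M] be an almost flow, π = {0 = t_0 < … < t_n = T} a partition of [0,T], a ∈ V, K ≥ 0 and y ∈ P_π[φ,a,K]. Define Φ^π_{i,j}(y) := Σ_{k=i}^{j−1} φ̂_{t_{k+1},t_k}(y_{t_k}) for 0 ≤ i ≤ j ≤ n. Then ‖Φ^π_{i,j}(y) − φ̂_{t_j,t_i}(y_{t_i})‖ ≤ A·ϖ(ω(t_i,t_j)) for all 0 ≤ i ≤ j ≤ n, where A := 2(δ(T)(1+K) + M)/(1 − κ). -/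
noncomputable section

variable {V : Type*} [NormedAddCommGroup V] [NormedSpace ℝ V]

/-- For `y ∈ 𝒫_π[φ,a,K]`, the discrete functional
`Φ^π_{i,j}(y) = ∑_{k=i}^{j-1} φ̂_{t_{k+1},t_k}(y_k)` satisfies
`‖Φ^π_{i,j}(y) - φ̂_{t_j,t_i}(y_i)‖ ≤ A ϖ(ω(t_i,t_j))` with
`A = 2(δ(T)(1+K) + M)/(1-κ)`. -/
theorem stmt_5 {V : Type*} [NormedAddCommGroup V] [NormedSpace ℝ V]
    (T κ M : ℝ) (δ ϖ : ℝ → ℝ) (ω : ℝ → ℝ → ℝ)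
    (hparams : GoodParams T κ δ ϖ) (hω : IsControl T ω) (hM : 0 ≤ M)
    (φ : ℝ → ℝ → V → V) (hφ : AlmostFlow T ω δ ϖ M φ)
    (n : ℕ) (t : ℕ → ℝ) (hπ : IsPartition T n t)
    (a : V) (K : ℝ) (hK : 0 ≤ K)
    (y : ℕ → V) (hy : DiscreteDSol ϖ ω φ n t a K y) :
    ∀ i j, i ≤ j → j ≤ n →
      ‖PhiSum φ t y i j - (φ (t j) (t i) (y i) - y i)‖ ≤
        2 * (δ T * (1 + K) + M) / (1 - κ) * ϖ (ω (t i) (t j)) := by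
  obtain ⟨hT, hκ0, hκ1, hδmono, hϖmono, hδ0, hϖ0, hκϖ, hκδ⟩ := hparams
  obtain ⟨hωnn, hωdiag, hωadd⟩ := hω
  obtain ⟨-, hφO, hφδ, hφM⟩ := hφ
  obtain ⟨ht0, htn, htlt⟩ := hπ
  obtain ⟨hy0, hyK⟩ := hy
  have tmono : ∀ p q : ℕ, p ≤ q → q ≤ n → t p ≤ t q := by
    intro p q hpq hqn
    induction q with
    | zero =>
      have hp : p = 0 := by omega
      rw [hp]
    | succ q ih =>
      rcases Nat.eq_or_lt_of_le hpq with h | h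
      · rw [h]
      · exact le_trans (ih (by omega) (by omega)) (le_of_lt (htlt q (by omega)))
  have tnn : ∀ p : ℕ, p ≤ n → 0 ≤ t p := fun p h => ht0 ▸ tmono 0 p (Nat.zero_le _) h
  have tT : ∀ p : ℕ, p ≤ n → t p ≤ T := fun p h => htn ▸ tmono p n h le_rfl
  have hδT : 0 ≤ δ T := hδ0 ▸ hδmono 0 T le_rfl hT.le
  have hϖnn : ∀ x : ℝ, 0 ≤ x → 0 ≤ ϖ x := fun x hx => hϖ0 ▸ hϖmono 0 x le_rfl hx
  have h1κ : 0 < 1 - κ := by linarith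
  set A := 2 * (δ T * (1 + K) + M) / (1 - κ) with hAdef
  have hC : 0 ≤ δ T * (1 + K) + M := by
    have := mul_nonneg hδT (by linarith : (0:ℝ) ≤ 1 + K); linarith
  have hA : 0 ≤ A := div_nonneg (by linarith) (by linarith)
  have hAκ : A * (1 - κ) = 2 * (δ T * (1 + K) + M) := by
    rw [hAdef]; field_simp
  suffices H : ∀ d i j, j - i ≤ d → i ≤ j → j ≤ n →
      ‖PhiSum φ t y i j - (φ (t j) (t i) (y i) - y i)‖ ≤ A * ϖ (ω (t i) (t j)) by
    intro i j hij hjn; exact H (j - i) i j le_rfl hij hjn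
  intro d
  induction d with
  | zero =>
    intro i j hd hij hjn
    have hji : i = j := by omega
    subst hji
    have hz : PhiSum φ t y i i = 0 := by simp [PhiSum]
    rw [hz, zero_sub, norm_neg]
    have h1 : ‖φ (t i) (t i) (y i) - y i‖ ≤ δ (t i - t i) :=
      hφδ (t i) (t i) (tnn i hjn) le_rfl (tT i hjn) (y i)
    rw [sub_self, hδ0] at h1
    rw [hωdiag (t i) (tnn i hjn) (tT i hjn), hϖ0, mul_zero]
    exact h1
  | succ d IH =>
    intro i j hd hij hjn
    by_cases hcase : j - i ≤ d
    · exact IH i j hcase hij hjn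
    have hilt : i < j := by omega
    have hin : i ≤ n := le_trans hij hjn
    have h0i : 0 ≤ t i := tnn i hin
    have htij : t i ≤ t j := tmono i j hij hjn
    have hx0 : 0 ≤ ω (t i) (t j) := hωnn (t i) (t j) h0i htij (tT j hjn)
    set x := ω (t i) (t j) with hxdef
    set S := (Finset.Icc i (j-1)).filter (fun m => ω (t i) (t m) ≤ x / 2) with hSdef
    have hiS : i ∈ S := by
      simp only [hSdef, Finset.mem_filter, Finset.mem_Icc]
      refine ⟨⟨le_rfl, by omega⟩, ?_⟩
      rw [hωdiag (t i) h0i (tT i hin)]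
      linarith
    have hSne : S.Nonempty := ⟨i, hiS⟩
    obtain ⟨m, hmS, hmax⟩ : ∃ m ∈ S, ∀ k ∈ S, k ≤ m :=
      ⟨S.max' hSne, S.max'_mem hSne, fun k hk => S.le_max' k hk⟩
    simp only [hSdef, Finset.mem_filter, Finset.mem_Icc] at hmS
    obtain ⟨⟨him, hmj1⟩, hωim⟩ := hmS
    have hmlt : m < j := by omega
    have hm1j : m + 1 ≤ j := hmlt
    have hmn : m ≤ n := by omega
    have hm1n : m + 1 ≤ n := by omega
    have h0m : 0 ≤ t m := tnn m hmn
    have htim : t i ≤ t m := tmono i m him hmn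
    have htmm1 : t m ≤ t (m+1) := tmono m (m+1) (by omega) hm1n
    have htm1j : t (m+1) ≤ t j := tmono (m+1) j hm1j hjn
    have htjT : t j ≤ T := tT j hjn
    have htm1T : t (m+1) ≤ T := le_trans htm1j htjT
    -- nonnegativity of the various controls
    have hωimnn : 0 ≤ ω (t i) (t m) := hωnn (t i) (t m) h0i htim (tT m hmn)
    have hωim1nn : 0 ≤ ω (t i) (t (m+1)) :=
      hωnn (t i) (t (m+1)) h0i (le_trans htim htmm1) htm1T
    have hωm1jnn : 0 ≤ ω (t (m+1)) (t j) :=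
      hωnn (t (m+1)) (t j) (tnn (m+1) hm1n) htm1j htjT
    have haddm1 : ω (t i) (t (m+1)) + ω (t (m+1)) (t j) ≤ x :=
      hωadd (t i) (t (m+1)) (t j) h0i (le_trans htim htmm1) htm1j htjT
    have hωim1 : ω (t i) (t (m+1)) ≤ x := by linarith
    -- right half is small
    have hωm1j : ω (t (m+1)) (t j) ≤ x / 2 := by
      rcases eq_or_lt_of_le hm1j with heq | hlt
      · rw [heq, hωdiag (t j) (tnn j hjn) htjT]; linarith
      · have hnotS : m + 1 ∉ S := fun h => by
          have := hmax _ h; omega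
        have hm1mem : ¬ ω (t i) (t (m+1)) ≤ x / 2 := by
          intro hle
          exact hnotS (by
            simp only [hSdef, Finset.mem_filter, Finset.mem_Icc]
            exact ⟨⟨by omega, by omega⟩, hle⟩)
        push_neg at hm1mem
        linarith
    -- induction hypotheses on the two halves
    have hUL := IH i m (by omega) him hmn
    have hUR := IH (m+1) j (by omega) hm1j hjn
    -- the four glue terms
    have hB1 : ‖(φ (t (m+1)) (t m) (y m) - y m)
        - (φ (t (m+1)) (t m) (φ (t m) (t i) (y i)) - φ (t m) (t i) (y i))‖ ≤
        1 * δ T * (1 + K) * ϖ (ω (t i) (t (m+1))) :=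
      hφO (t i) (t m) (t (m+1)) h0i htim htmm1 htm1T K hK
        (y m) (φ (t m) (t i) (y i)) (hyK i m him hmn)
    have hB2 := hφM (t i) (t m) (t (m+1)) h0i htim htmm1 htm1T (y i)
    have hB3 : ‖(φ (t j) (t (m+1)) (y (m+1)) - y (m+1))
        - (φ (t j) (t (m+1)) (φ (t (m+1)) (t i) (y i)) - φ (t (m+1)) (t i) (y i))‖ ≤
        1 * δ T * (1 + K) * ϖ (ω (t i) (t j)) :=
      hφO (t i) (t (m+1)) (t j) h0i (le_trans htim htmm1) htm1j htjT K hK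
        (y (m+1)) (φ (t (m+1)) (t i) (y i)) (hyK i (m+1) (by omega) hm1n)
    have hB4 := hφM (t i) (t (m+1)) (t j) h0i (le_trans htim htmm1) htm1j htjT (y i)
    -- splitting the sum
    have hsplit : PhiSum φ t y i j = PhiSum φ t y i m +
        ((φ (t (m+1)) (t m) (y m) - y m) + PhiSum φ t y (m+1) j) := by
      unfold PhiSum
      rw [← Finset.sum_Ico_consecutive _ him (le_of_lt hmlt)]
      congr 1
      exact Finset.sum_eq_sum_Ico_succ_bot hmlt _
    have key : PhiSum φ t y i j - (φ (t j) (t i) (y i) - y i)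
        = (PhiSum φ t y i m - (φ (t m) (t i) (y i) - y i))
        + (PhiSum φ t y (m+1) j - (φ (t j) (t (m+1)) (y (m+1)) - y (m+1)))
        + ((φ (t (m+1)) (t m) (y m) - y m)
            - (φ (t (m+1)) (t m) (φ (t m) (t i) (y i)) - φ (t m) (t i) (y i)))
        + (φ (t (m+1)) (t m) (φ (t m) (t i) (y i)) - φ (t (m+1)) (t i) (y i))
        + ((φ (t j) (t (m+1)) (y (m+1)) - y (m+1))
            - (φ (t j) (t (m+1)) (φ (t (m+1)) (t i) (y i)) - φ (t (m+1)) (t i) (y i)))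
        + (φ (t j) (t (m+1)) (φ (t (m+1)) (t i) (y i)) - φ (t j) (t i) (y i)) := by
      rw [hsplit]; abel
    rw [key]
    have htri : ∀ a b c d e f : V,
        ‖a + b + c + d + e + f‖ ≤ ‖a‖ + ‖b‖ + ‖c‖ + ‖d‖ + ‖e‖ + ‖f‖ := by
      intro a b c d e f
      have h1 := norm_add_le (a + b + c + d + e) f
      have h2 := norm_add_le (a + b + c + d) e
      have h3 := norm_add_le (a + b + c) d
      have h4 := norm_add_le (a + b) c
      have h5 := norm_add_le a b
      linarith
    refine le_trans (htri _ _ _ _ _ _) ?_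
    -- monotonicity consequences
    have hm1 : ϖ (ω (t i) (t m)) ≤ ϖ (x / 2) := hϖmono _ _ hωimnn hωim
    have hm2 : ϖ (ω (t (m+1)) (t j)) ≤ ϖ (x / 2) := hϖmono _ _ hωm1jnn hωm1j
    have hm3 : ϖ (ω (t i) (t (m+1))) ≤ ϖ x := hϖmono _ _ hωim1nn hωim1
    have hκx : 2 * ϖ (x / 2) ≤ κ * ϖ x := hκϖ x hx0
    have hϖx : 0 ≤ ϖ x := hϖnn x hx0
    have hϖim1n : 0 ≤ ϖ (ω (t i) (t (m+1))) := hϖnn _ hωim1nn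
    have e1 : A * ϖ (ω (t i) (t m)) ≤ A * ϖ (x / 2) := mul_le_mul_of_nonneg_left hm1 hA
    have e2 : A * ϖ (ω (t (m+1)) (t j)) ≤ A * ϖ (x / 2) := mul_le_mul_of_nonneg_left hm2 hA
    have e3 : 1 * δ T * (1 + K) * ϖ (ω (t i) (t (m+1))) ≤ δ T * (1 + K) * ϖ x := by
      rw [one_mul]
      exact mul_le_mul_of_nonneg_left hm3 (mul_nonneg hδT (by linarith))
    have e4 : M * ϖ (ω (t i) (t (m+1))) ≤ M * ϖ x := mul_le_mul_of_nonneg_left hm3 hM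
    have e5 : A * (2 * ϖ (x / 2)) ≤ A * (κ * ϖ x) := mul_le_mul_of_nonneg_left hκx hA
    have e6 : 2 * (δ T * (1 + K) + M) * ϖ x = A * (1 - κ) * ϖ x := by rw [hAκ]
    linarith [hUL, hUR, hB1, hB2, hB3, hB4, e1, e2, e3, e4, e5, e6]
end
end

section
/- (Lasota–Yorke lemma.) Let (M,d) be a complete metric space, N ⊆ M a dense subset, and Θ: M → [0,∞) a function such that Θ(x) = 0 for every x ∈ N and Θ is continuous at every point of N. Then the set {x ∈ M : Θ(x) = 0} is residual in M, i.e. its complement is of Baire first category (meagre). -/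
noncomputable section

variable {V : Type*} [NormedAddCommGroup V] [NormedSpace ℝ V]

/-- (Lasota–Yorke lemma.) Let `X` be a complete metric space, `N ⊆ X`
dense, and `Θ : X → [0,∞)` vanishing on `N` and continuous at every point of `N`.
Then `{x | Θ x = 0}` is residual in `X`. -/
theorem stmt_13 {X : Type*} [MetricSpace X] [CompleteSpace X]
    (N : Set X) (hN : Dense N)
    (Θ : X → ℝ) (hΘnonneg : ∀ x, 0 ≤ Θ x)
    (hΘzero : ∀ x ∈ N, Θ x = 0)
    (hΘcont : ∀ x ∈ N, ContinuousAt Θ x) :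
    {x : X | Θ x = 0} ∈ residual X := by
  have hU : ∀ n : ℕ, interior {x | Θ x < 1 / (n + 1)} ∈ residual X := by
    intro n
    apply residual_of_dense_open isOpen_interior
    rw [dense_iff_inter_open]
    intro U hUo hUne
    obtain ⟨y, hyN, hyU⟩ := hN.exists_mem_open hUo hUne
    have hlt : Θ y < 1 / (n + 1) := by
      rw [hΘzero y hyN]; positivity
    have hnhds : {x | Θ x < 1 / (n + 1)} ∈ nhds y :=
      (hΘcont y hyN).eventually (Filter.Tendsto.eventually_lt_const hlt Filter.tendsto_id)
    exact ⟨y, hyU, mem_interior_iff_mem_nhds.mpr hnhds⟩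
  have hInt : (⋂ n : ℕ, interior {x | Θ x < 1 / (n + 1)}) ∈ residual X :=
    (countable_iInter_mem).mpr hU
  refine Filter.mem_of_superset hInt ?_
  intro x hx
  simp only [Set.mem_iInter] at hx
  have h : ∀ n : ℕ, Θ x < 1 / (n + 1) := fun n => by
    have hmem : x ∈ {x | Θ x < 1 / (n + 1)} := interior_subset (hx n)
    exact hmem
  have hle : Θ x ≤ 0 := by
    by_contra h'
    push_neg at h'
    obtain ⟨n, hn⟩ := exists_nat_one_div_lt h'
    exact absurd (h n) (not_lt.mpr hn.le)
  exact le_antisymm hle (hΘnonneg x)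
end
end

section
/- (Almost-flow property of the Davie approximation.) Let d, m ≥ 1, 2 ≤ p < 3 and γ ∈ (0,1]. Let f: ℝ^m → L(ℝ^d,ℝ^m) be bounded and differentiable with bounded derivative Df, and with Df γ-Hölder continuous; write ‖f‖_{1+γ} := sup_a ‖f(a)‖ + sup_a ‖Df(a)‖ + sup_{a≠b} ‖Df(a)−Df(b)‖/‖a−b‖^γ. Let ω be a control on 𝕋²₊ and let x¹: 𝕋²₊ → ℝ^d and x²: 𝕋²₊ → ℝ^{d×d} satisfy Chen's relations x¹(r,t) = x¹(r,s) + x¹(s,t) and x²(r,t) = x²(r,s) + x²(s,t) + x¹(r,s)⊗x¹(s,t) for all (r,s,t) ∈ 𝕋³₊ (where u⊗v denotes the d×d matrix u vᵀ), together with the bounds ‖x¹(s,t)‖ ≤ C_x·ω(s,t)^{1/p} and ‖x²(s,t)‖ ≤ C_x·ω(s,t)^{2/p}. Define the Davie approximation φ_{t,s}(a) := a + f(a)x¹(s,t) + f²(a)·x²(s,t), where f²(a) is the linear map on d×d matrices determined on elementary tensors by f²(a)·(u⊗v) := (Df(a)(f(a)u))(v). Then there exists a constant M ≥ 0, depending only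 on ‖f‖_{1+γ}, C_x, γ, p and ω(0,T), such that ‖φ_{t,s}(φ_{s,r}(a)) − φ_{t,r}(a)‖ ≤ M·ω(r,t)^{(2+γ)/p} for all (r,s,t) ∈ 𝕋³₊ and all a ∈ ℝ^m. -/
noncomputable section

variable {V : Type*} [NormedAddCommGroup V] [NormedSpace ℝ V]

/-- The Davie approximation `φ_{t,s}(a) = a + f(a) x¹(s,t) + f²(a)·x²(s,t)`, where
`f²(a)` acts on the matrix `x²(s,t)` through elementary tensors by
`f²(a)·(u ⊗ v) = (Df(a)(f(a)u))(v)`. -/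
def davieApprox (d m : ℕ)
    (f : (Fin m → ℝ) → ((Fin d → ℝ) →L[ℝ] (Fin m → ℝ)))
    (Df : (Fin m → ℝ) → ((Fin m → ℝ) →L[ℝ] ((Fin d → ℝ) →L[ℝ] (Fin m → ℝ))))
    (x₁ : ℝ → ℝ → (Fin d → ℝ)) (x₂ : ℝ → ℝ → (Fin d → Fin d → ℝ))
    (t s : ℝ) (a : Fin m → ℝ) : Fin m → ℝ :=
  a + f a (x₁ s t) +
    ∑ i : Fin d, ∑ j : Fin d,
      x₂ s t i j • (Df a (f a (Pi.single i 1)) (Pi.single j 1))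


section Aux

/-- Mean value inequality: `f` with derivative bounded by `F₁` is `F₁`-Lipschitz. -/
theorem lip_aux {E F : Type*} [NormedAddCommGroup E] [NormedSpace ℝ E]
    [NormedAddCommGroup F] [NormedSpace ℝ F]
    (f : E → F) (Df : E → E →L[ℝ] F) (hDf : ∀ x, HasFDerivAt f (Df x) x)
    (F₁ : ℝ) (hF₁ : ∀ x, ‖Df x‖ ≤ F₁) (a b : E) : ‖f b - f a‖ ≤ F₁ * ‖b - a‖ :=
  Convex.norm_image_sub_le_of_norm_hasFDerivWithin_le
    (fun x _ => (hDf x).hasFDerivWithinAt) (fun x _ => hF₁ x) convex_univ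
    (Set.mem_univ a) (Set.mem_univ b)

/-- Taylor estimate for a function with `γ`-Hölder derivative. -/
theorem taylor_aux {E F : Type*} [NormedAddCommGroup E] [NormedSpace ℝ E]
    [NormedAddCommGroup F] [NormedSpace ℝ F]
    (f : E → F) (Df : E → E →L[ℝ] F) (hDf : ∀ x, HasFDerivAt f (Df x) x)
    (F₂ γ : ℝ) (hF₂0 : 0 ≤ F₂) (hγ : 0 ≤ γ)
    (hF₂ : ∀ x y, ‖Df x - Df y‖ ≤ F₂ * ‖x - y‖ ^ γ) (a b : E) :
    ‖f b - f a - Df a (b - a)‖ ≤ F₂ * ‖b - a‖ ^ γ * ‖b - a‖ := by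
  have bound : ∀ x ∈ Metric.closedBall a ‖b - a‖, ‖Df x - Df a‖ ≤ F₂ * ‖b - a‖ ^ γ := by
    intro x hx
    calc ‖Df x - Df a‖ ≤ F₂ * ‖x - a‖ ^ γ := hF₂ x a
      _ ≤ F₂ * ‖b - a‖ ^ γ := by
          apply mul_le_mul_of_nonneg_left _ hF₂0
          exact Real.rpow_le_rpow (norm_nonneg _)
            (by simpa [Metric.mem_closedBall, dist_eq_norm] using hx) hγ
  exact Convex.norm_image_sub_le_of_norm_hasFDerivWithin_le'
    (fun x _ => (hDf x).hasFDerivWithinAt) bound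
    (convex_closedBall _ _)
    (Metric.mem_closedBall_self (norm_nonneg _))
    (by simp [Metric.mem_closedBall, dist_eq_norm])

/-- The quadratic part of the Davie approximation. -/
def davieQ (d m : ℕ)
    (f : (Fin m → ℝ) → ((Fin d → ℝ) →L[ℝ] (Fin m → ℝ)))
    (Df : (Fin m → ℝ) → ((Fin m → ℝ) →L[ℝ] ((Fin d → ℝ) →L[ℝ] (Fin m → ℝ))))
    (a : Fin m → ℝ) (Z : Fin d → Fin d → ℝ) : Fin m → ℝ :=
  ∑ i : Fin d, ∑ j : Fin d, Z i j • (Df a (f a (Pi.single i 1)) (Pi.single j 1))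

variable {d m : ℕ}
  (f : (Fin m → ℝ) → ((Fin d → ℝ) →L[ℝ] (Fin m → ℝ)))
  (Df : (Fin m → ℝ) → ((Fin m → ℝ) →L[ℝ] ((Fin d → ℝ) →L[ℝ] (Fin m → ℝ))))

theorem davieApprox_eq (x₁ : ℝ → ℝ → (Fin d → ℝ)) (x₂ : ℝ → ℝ → (Fin d → Fin d → ℝ))
    (t s : ℝ) (a : Fin m → ℝ) :
    davieApprox d m f Df x₁ x₂ t s a = a + f a (x₁ s t) + davieQ d m f Df a (x₂ s t) := rfl

theorem davieQ_add (a : Fin m → ℝ) (Z W : Fin d → Fin d → ℝ) :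
    davieQ d m f Df a (Z + W) = davieQ d m f Df a Z + davieQ d m f Df a W := by
  simp [davieQ, add_smul, Finset.sum_add_distrib]

theorem davieQ_tensor (a : Fin m → ℝ) (X1 X2 : Fin d → ℝ) :
    davieQ d m f Df a (fun i j => X1 i * X2 j) = Df a (f a X1) X2 := by
  have h1 : X1 = ∑ i, X1 i • (Pi.single i 1 : Fin d → ℝ) := by
    funext k; simp [Finset.sum_apply, Pi.single_apply]
  have h2 : X2 = ∑ j, X2 j • (Pi.single j 1 : Fin d → ℝ) := by
    funext k; simp [Finset.sum_apply, Pi.single_apply]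
  conv_rhs => rw [h1, h2]
  simp only [davieQ, map_sum, ContinuousLinearMap.sum_apply, ContinuousLinearMap.map_smul,
    ContinuousLinearMap.smul_apply, Finset.smul_sum, smul_smul, mul_comm]
  rw [Finset.sum_comm]

theorem single_norm_le (i : Fin d) : ‖(Pi.single i 1 : Fin d → ℝ)‖ ≤ 1 := by
  apply pi_norm_le_iff_of_nonneg zero_le_one |>.mpr
  intro j
  rcases eq_or_ne i j with h|h <;> simp [Pi.single_apply, h]

theorem entry_norm_le (Z : Fin d → Fin d → ℝ) (i j : Fin d) : ‖Z i j‖ ≤ ‖Z‖ :=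
  (norm_le_pi_norm (Z i) j).trans (norm_le_pi_norm Z i)

theorem davieQ_norm_le (F₀ F₁ : ℝ) (hF₀ : ∀ a, ‖f a‖ ≤ F₀) (hF₁ : ∀ a, ‖Df a‖ ≤ F₁)
    (a : Fin m → ℝ) (Z : Fin d → Fin d → ℝ) :
    ‖davieQ d m f Df a Z‖ ≤ (d : ℝ) ^ 2 * (F₁ * F₀) * ‖Z‖ := by
  have hF₀0 : 0 ≤ F₀ := le_trans (norm_nonneg (f a)) (hF₀ a)
  have hF₁0 : 0 ≤ F₁ := le_trans (norm_nonneg (Df a)) (hF₁ a)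
  have hv : ∀ i j : Fin d, ‖Df a (f a (Pi.single i 1)) (Pi.single j 1)‖ ≤ F₁ * F₀ := by
    intro i j
    have h1 : ‖f a (Pi.single i 1)‖ ≤ F₀ := by
      calc ‖f a (Pi.single i 1)‖ ≤ ‖f a‖ * ‖(Pi.single i 1 : Fin d → ℝ)‖ :=
            (f a).le_opNorm _
        _ ≤ F₀ * 1 := mul_le_mul (hF₀ a) (single_norm_le i) (norm_nonneg _) hF₀0
        _ = F₀ := mul_one _
    have h2 : ‖Df a (f a (Pi.single i 1))‖ ≤ F₁ * F₀ :=
      ((Df a).le_opNorm _).trans (mul_le_mul (hF₁ a) h1 (norm_nonneg _) hF₁0)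
    calc ‖Df a (f a (Pi.single i 1)) (Pi.single j 1)‖
        ≤ ‖Df a (f a (Pi.single i 1))‖ * ‖(Pi.single j 1 : Fin d → ℝ)‖ :=
          ContinuousLinearMap.le_opNorm _ _
      _ ≤ (F₁ * F₀) * 1 := mul_le_mul h2 (single_norm_le j) (norm_nonneg _)
          (by positivity)
      _ = F₁ * F₀ := mul_one _
  calc ‖davieQ d m f Df a Z‖
      ≤ ∑ i : Fin d, ‖∑ j : Fin d, Z i j • (Df a (f a (Pi.single i 1)) (Pi.single j 1))‖ :=
        norm_sum_le _ _
    _ ≤ ∑ i : Fin d, ∑ j : Fin d, ‖Z i j • (Df a (f a (Pi.single i 1)) (Pi.single j 1))‖ :=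
        Finset.sum_le_sum fun i _ => norm_sum_le _ _
    _ ≤ ∑ _i : Fin d, ∑ _j : Fin d, ‖Z‖ * (F₁ * F₀) := by
        refine Finset.sum_le_sum fun i _ => Finset.sum_le_sum fun j _ => ?_
        rw [norm_smul]
        exact mul_le_mul (entry_norm_le Z i j) (hv i j) (norm_nonneg _) (norm_nonneg _)
    _ = (d : ℝ) ^ 2 * (F₁ * F₀) * ‖Z‖ := by
        simp [Finset.sum_const, Finset.card_univ]
        ring

theorem davieQ_sub_norm_le (hDf : ∀ x, HasFDerivAt f (Df x) x)
    (F₀ F₁ F₂ γ : ℝ) (hF₂0 : 0 ≤ F₂) (hγ : 0 ≤ γ)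
    (hF₀ : ∀ a, ‖f a‖ ≤ F₀) (hF₁ : ∀ a, ‖Df a‖ ≤ F₁)
    (hF₂ : ∀ x y, ‖Df x - Df y‖ ≤ F₂ * ‖x - y‖ ^ γ)
    (a b : Fin m → ℝ) (Z : Fin d → Fin d → ℝ) :
    ‖davieQ d m f Df b Z - davieQ d m f Df a Z‖ ≤
      (d : ℝ) ^ 2 * ‖Z‖ * (F₂ * ‖b - a‖ ^ γ * F₀ + F₁ * (F₁ * ‖b - a‖)) := by
  have hF₀0 : 0 ≤ F₀ := le_trans (norm_nonneg (f a)) (hF₀ a)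
  have hF₁0 : 0 ≤ F₁ := le_trans (norm_nonneg (Df a)) (hF₁ a)
  have hv : ∀ i j : Fin d,
      ‖Df b (f b (Pi.single i 1)) (Pi.single j 1) - Df a (f a (Pi.single i 1)) (Pi.single j 1)‖
        ≤ F₂ * ‖b - a‖ ^ γ * F₀ + F₁ * (F₁ * ‖b - a‖) := by
    intro i j
    have hdecomp : Df b (f b (Pi.single i 1)) (Pi.single j 1) -
        Df a (f a (Pi.single i 1)) (Pi.single j 1) =
        ((Df b - Df a) (f b (Pi.single i 1))) (Pi.single j 1) +
          (Df a ((f b - f a) (Pi.single i 1))) (Pi.single j 1) := by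
      simp only [ContinuousLinearMap.sub_apply, map_sub, Pi.sub_apply]
      abel
    have hfb : ‖f b (Pi.single i 1)‖ ≤ F₀ := by
      calc ‖f b (Pi.single i 1)‖ ≤ ‖f b‖ * ‖(Pi.single i 1 : Fin d → ℝ)‖ := (f b).le_opNorm _
        _ ≤ F₀ * 1 := mul_le_mul (hF₀ b) (single_norm_le i) (norm_nonneg _) hF₀0
        _ = F₀ := mul_one _
    have h1 : ‖((Df b - Df a) (f b (Pi.single i 1))) (Pi.single j 1)‖ ≤
        F₂ * ‖b - a‖ ^ γ * F₀ := by
      calc ‖((Df b - Df a) (f b (Pi.single i 1))) (Pi.single j 1)‖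
          ≤ ‖(Df b - Df a) (f b (Pi.single i 1))‖ * ‖(Pi.single j 1 : Fin d → ℝ)‖ :=
            ContinuousLinearMap.le_opNorm _ _
        _ ≤ (‖Df b - Df a‖ * ‖f b (Pi.single i 1)‖) * 1 :=
            mul_le_mul (ContinuousLinearMap.le_opNorm _ _) (single_norm_le j)
              (norm_nonneg _) (by positivity)
        _ = ‖Df b - Df a‖ * ‖f b (Pi.single i 1)‖ := mul_one _
        _ ≤ (F₂ * ‖b - a‖ ^ γ) * F₀ :=
            mul_le_mul (hF₂ b a) hfb (norm_nonneg _) (by positivity)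
    have hlip : ‖(f b - f a) (Pi.single i 1)‖ ≤ F₁ * ‖b - a‖ := by
      calc ‖(f b - f a) (Pi.single i 1)‖
          ≤ ‖f b - f a‖ * ‖(Pi.single i 1 : Fin d → ℝ)‖ := ContinuousLinearMap.le_opNorm _ _
        _ ≤ (F₁ * ‖b - a‖) * 1 := mul_le_mul (lip_aux f Df hDf F₁ hF₁ a b)
            (single_norm_le i) (norm_nonneg _) (by positivity)
        _ = F₁ * ‖b - a‖ := mul_one _
    have h2 : ‖(Df a ((f b - f a) (Pi.single i 1))) (Pi.single j 1)‖ ≤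
        F₁ * (F₁ * ‖b - a‖) := by
      calc ‖(Df a ((f b - f a) (Pi.single i 1))) (Pi.single j 1)‖
          ≤ ‖Df a ((f b - f a) (Pi.single i 1))‖ * ‖(Pi.single j 1 : Fin d → ℝ)‖ :=
            ContinuousLinearMap.le_opNorm _ _
        _ ≤ (‖Df a‖ * ‖(f b - f a) (Pi.single i 1)‖) * 1 :=
            mul_le_mul (ContinuousLinearMap.le_opNorm _ _) (single_norm_le j)
              (norm_nonneg _) (by positivity)
        _ = ‖Df a‖ * ‖(f b - f a) (Pi.single i 1)‖ := mul_one _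
        _ ≤ F₁ * (F₁ * ‖b - a‖) := mul_le_mul (hF₁ a) hlip (norm_nonneg _) hF₁0
    calc ‖Df b (f b (Pi.single i 1)) (Pi.single j 1) -
        Df a (f a (Pi.single i 1)) (Pi.single j 1)‖
        = ‖((Df b - Df a) (f b (Pi.single i 1))) (Pi.single j 1) +
            (Df a ((f b - f a) (Pi.single i 1))) (Pi.single j 1)‖ := by rw [hdecomp]
      _ ≤ _ := (norm_add_le _ _).trans (add_le_add h1 h2)
  have hsplit : davieQ d m f Df b Z - davieQ d m f Df a Z =
      ∑ i : Fin d, ∑ j : Fin d, Z i j •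
        (Df b (f b (Pi.single i 1)) (Pi.single j 1) -
          Df a (f a (Pi.single i 1)) (Pi.single j 1)) := by
    simp [davieQ, smul_sub, Finset.sum_sub_distrib]
  rw [hsplit]
  calc ‖∑ i : Fin d, ∑ j : Fin d, Z i j •
        (Df b (f b (Pi.single i 1)) (Pi.single j 1) -
          Df a (f a (Pi.single i 1)) (Pi.single j 1))‖
      ≤ ∑ i : Fin d, ∑ j : Fin d, ‖Z i j •
        (Df b (f b (Pi.single i 1)) (Pi.single j 1) -
          Df a (f a (Pi.single i 1)) (Pi.single j 1))‖ :=
        (norm_sum_le _ _).trans (Finset.sum_le_sum fun i _ => norm_sum_le _ _)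
    _ ≤ ∑ _i : Fin d, ∑ _j : Fin d, ‖Z‖ * (F₂ * ‖b - a‖ ^ γ * F₀ + F₁ * (F₁ * ‖b - a‖)) := by
        refine Finset.sum_le_sum fun i _ => Finset.sum_le_sum fun j _ => ?_
        rw [norm_smul]
        exact mul_le_mul (entry_norm_le Z i j) (hv i j) (norm_nonneg _) (norm_nonneg _)
    _ = (d : ℝ) ^ 2 * ‖Z‖ * (F₂ * ‖b - a‖ ^ γ * F₀ + F₁ * (F₁ * ‖b - a‖)) := by
        simp [Finset.sum_const, Finset.card_univ]
        ring

end Aux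

set_option maxHeartbeats 1000000 in
/-- (Almost-flow property of the Davie approximation.) If `f` is
bounded with a bounded, `γ`-Hölder derivative `Df`, and `(x¹, x²)` is a `p`-rough
path controlled by `ω` (Chen's relations and the bounds `‖x¹(s,t)‖ ≤ C_x ω(s,t)^{1/p}`,
`‖x²(s,t)‖ ≤ C_x ω(s,t)^{2/p}`), then the Davie approximation `φ` satisfies
`‖φ_{t,s}(φ_{s,r}(a)) - φ_{t,r}(a)‖ ≤ M ω(r,t)^{(2+γ)/p}` for a constant `M`. -/
theorem stmt_16 (d m : ℕ) (hd : 1 ≤ d) (hm : 1 ≤ m)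
    (p γ : ℝ) (hp2 : 2 ≤ p) (hp3 : p < 3) (hγ0 : 0 < γ) (hγ1 : γ ≤ 1)
    (T : ℝ) (hT : 0 < T) (ω : ℝ → ℝ → ℝ) (hω : IsControl T ω)
    (f : (Fin m → ℝ) → ((Fin d → ℝ) →L[ℝ] (Fin m → ℝ)))
    (Df : (Fin m → ℝ) → ((Fin m → ℝ) →L[ℝ] ((Fin d → ℝ) →L[ℝ] (Fin m → ℝ))))
    (hDf : ∀ a, HasFDerivAt f (Df a) a)
    (F₀ F₁ F₂ : ℝ) (hF₀ : ∀ a, ‖f a‖ ≤ F₀) (hF₁ : ∀ a, ‖Df a‖ ≤ F₁)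
    (hF₂ : ∀ a b, ‖Df a - Df b‖ ≤ F₂ * ‖a - b‖ ^ γ)
    (Cx : ℝ) (hCx : 0 ≤ Cx)
    (x₁ : ℝ → ℝ → (Fin d → ℝ)) (x₂ : ℝ → ℝ → (Fin d → Fin d → ℝ))
    (hchen1 : ∀ r s t, 0 ≤ r → r ≤ s → s ≤ t → t ≤ T → x₁ r t = x₁ r s + x₁ s t)
    (hchen2 : ∀ r s t, 0 ≤ r → r ≤ s → s ≤ t → t ≤ T → ∀ i j : Fin d,
      x₂ r t i j = x₂ r s i j + x₂ s t i j + x₁ r s i * x₁ s t j)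
    (hx₁ : ∀ s t, 0 ≤ s → s ≤ t → t ≤ T → ‖x₁ s t‖ ≤ Cx * ω s t ^ (1 / p))
    (hx₂ : ∀ s t, 0 ≤ s → s ≤ t → t ≤ T → ‖x₂ s t‖ ≤ Cx * ω s t ^ (2 / p)) :
    ∃ M : ℝ, 0 ≤ M ∧
      ∀ r s t, 0 ≤ r → r ≤ s → s ≤ t → t ≤ T → ∀ a : Fin m → ℝ,
        ‖davieApprox d m f Df x₁ x₂ t s (davieApprox d m f Df x₁ x₂ s r a) -
            davieApprox d m f Df x₁ x₂ t r a‖ ≤ M * ω r t ^ ((2 + γ) / p) := by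
  have hp0 : (0:ℝ) < p := lt_of_lt_of_le two_pos hp2
  -- nonnegativity of the constants
  have hF₀0 : 0 ≤ F₀ := le_trans (norm_nonneg (f 0)) (hF₀ 0)
  have hF₁0 : 0 ≤ F₁ := le_trans (norm_nonneg (Df 0)) (hF₁ 0)
  have hF₂0 : 0 ≤ F₂ := by
    have hne : Nonempty (Fin m) := Fin.pos_iff_nonempty.mp hm
    have h1 : ‖(0 : Fin m → ℝ) - 1‖ = 1 := by
      simp [Pi.norm_def]
    have := le_trans (norm_nonneg (Df 0 - Df 1)) (hF₂ 0 1)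
    rw [h1, Real.one_rpow] at this
    linarith
  have hγ0' : (0:ℝ) ≤ γ := hγ0.le
  -- basic control facts
  obtain ⟨hωnn, hωdiag, hωsup⟩ := hω
  have hΩ0 : 0 ≤ ω 0 T := hωnn 0 T le_rfl hT.le le_rfl
  -- the constants
  set D2 : ℝ := (d : ℝ) ^ 2 with hD2
  set Ω1 : ℝ := (ω 0 T) ^ (1/p) with hΩ1
  have hΩ10 : 0 ≤ Ω1 := Real.rpow_nonneg hΩ0 _
  set K₀ : ℝ := D2 * (F₁ * F₀) with hK₀
  have hK₀0 : 0 ≤ K₀ := by positivity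
  set K₁ : ℝ := Cx * F₀ + K₀ * Cx * Ω1 with hK₁
  have hK₁0 : 0 ≤ K₁ := by positivity
  set E : ℝ := Ω1 ^ (1 - γ) with hE
  have hE0 : 0 ≤ E := Real.rpow_nonneg hΩ10 _
  refine ⟨Cx * (F₂ * K₁ ^ γ * K₁) + F₁ * (K₀ * Cx) * Cx * E +
      D2 * Cx * (F₂ * K₁ ^ γ * F₀) + D2 * Cx * (F₁ * (F₁ * K₁)) * E, ?_, ?_⟩
  · have : 0 ≤ K₁ ^ γ := Real.rpow_nonneg hK₁0 _
    positivity
  intro r s t hr hrs hst htT a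
  have hrT : r ≤ T := le_trans (le_trans hrs hst) htT
  have hsT : s ≤ T := le_trans hst htT
  have hs0 : 0 ≤ s := le_trans hr hrs
  have ht0 : 0 ≤ t := le_trans hs0 hst
  set w : ℝ := ω r t with hwdef
  have hw0 : 0 ≤ w := hωnn r t hr (le_trans hrs hst) htT
  have hwrs : ω r s ≤ w := by
    have := hωsup r s t hr hrs hst htT
    have := hωnn s t hs0 hst htT
    linarith
  have hwst : ω s t ≤ w := by
    have := hωsup r s t hr hrs hst htT
    have := hωnn r s hr hrs hsT
    linarith
  have hwΩ : w ≤ ω 0 T := by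
    have h1 := hωsup 0 r t le_rfl hr (le_trans hrs hst) htT
    have h2 := hωsup 0 t T le_rfl ht0 htT le_rfl
    have h3 := hωnn 0 r le_rfl hr hrT
    have h4 := hωnn t T ht0 htT le_rfl
    simp only [← hwdef] at h1
    linarith
  set u : ℝ := w ^ (1/p) with hudef
  have hu0 : 0 ≤ u := Real.rpow_nonneg hw0 _
  have huΩ : u ≤ Ω1 := Real.rpow_le_rpow hw0 hwΩ (by positivity)
  -- rpow exponent bookkeeping
  have hu2 : w ^ ((2:ℝ)/p) = u * u := by
    rw [show (2:ℝ)/p = 1/p + 1/p by ring,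
      Real.rpow_add' hw0 (by positivity), hudef]
  have hu2γ : u ^ ((2:ℝ) + γ) = u ^ γ * u * u := by
    rw [show (2:ℝ) + γ = γ + 1 + 1 by ring,
      Real.rpow_add' hu0 (by positivity),
      Real.rpow_add' hu0 (by positivity), Real.rpow_one]
  have hu3 : u * u * u ≤ E * u ^ ((2:ℝ) + γ) := by
    have h1 : u * u * u = u ^ ((2:ℝ) + γ) * u ^ (1 - γ) := by
      rw [← Real.rpow_add' hu0 (by norm_num : ((2:ℝ) + γ) + (1 - γ) ≠ 0)]
      rw [show ((2:ℝ) + γ) + (1 - γ) = 1 + 1 + 1 by ring,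
        Real.rpow_add' hu0 (by norm_num), Real.rpow_add' hu0 (by norm_num),
        Real.rpow_one]
    rw [h1, mul_comm (u ^ ((2:ℝ) + γ))]
    have : u ^ (1 - γ) ≤ E := Real.rpow_le_rpow hu0 huΩ (by linarith)
    exact mul_le_mul_of_nonneg_right this (Real.rpow_nonneg hu0 _)
  have hufinal : w ^ ((2 + γ)/p) = u ^ ((2:ℝ) + γ) := by
    rw [show (2 + γ)/p = (1/p) * (2 + γ) by ring, Real.rpow_mul hw0]
  -- norms of the rough path pieces
  have hX1rs : ‖x₁ r s‖ ≤ Cx * u := by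
    refine (hx₁ r s hr hrs hsT).trans ?_
    exact mul_le_mul_of_nonneg_left
      (Real.rpow_le_rpow (hωnn r s hr hrs hsT) hwrs (by positivity)) hCx
  have hX1st : ‖x₁ s t‖ ≤ Cx * u := by
    refine (hx₁ s t hs0 hst htT).trans ?_
    exact mul_le_mul_of_nonneg_left
      (Real.rpow_le_rpow (hωnn s t hs0 hst htT) hwst (by positivity)) hCx
  have hX2rs : ‖x₂ r s‖ ≤ Cx * (u * u) := by
    refine (hx₂ r s hr hrs hsT).trans ?_
    rw [← hu2]
    exact mul_le_mul_of_nonneg_left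
      (Real.rpow_le_rpow (hωnn r s hr hrs hsT) hwrs (by positivity)) hCx
  have hX2st : ‖x₂ s t‖ ≤ Cx * (u * u) := by
    refine (hx₂ s t hs0 hst htT).trans ?_
    rw [← hu2]
    exact mul_le_mul_of_nonneg_left
      (Real.rpow_le_rpow (hωnn s t hs0 hst htT) hwst (by positivity)) hCx
  -- the intermediate point
  obtain ⟨b, hbdef⟩ : ∃ b : Fin m → ℝ, b = davieApprox d m f Df x₁ x₂ s r a := ⟨_, rfl⟩
  rw [← hbdef]
  have hbeq : b = a + f a (x₁ r s) + davieQ d m f Df a (x₂ r s) := by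
    rw [hbdef, davieApprox_eq]
  have hsub : b - a = f a (x₁ r s) + davieQ d m f Df a (x₂ r s) := by
    rw [hbeq]; abel
  have hbma : ‖b - a‖ ≤ K₁ * u := by
    rw [hsub]
    calc ‖f a (x₁ r s) + davieQ d m f Df a (x₂ r s)‖
        ≤ ‖f a (x₁ r s)‖ + ‖davieQ d m f Df a (x₂ r s)‖ := norm_add_le _ _
      _ ≤ F₀ * (Cx * u) + K₀ * (Cx * (u * u)) := by
          refine add_le_add ?_ ?_
          · calc ‖f a (x₁ r s)‖ ≤ ‖f a‖ * ‖x₁ r s‖ := (f a).le_opNorm _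
              _ ≤ F₀ * (Cx * u) := mul_le_mul (hF₀ a) hX1rs (norm_nonneg _) hF₀0
          · exact (davieQ_norm_le f Df F₀ F₁ hF₀ hF₁ a (x₂ r s)).trans
              (mul_le_mul_of_nonneg_left hX2rs hK₀0)
      _ ≤ F₀ * (Cx * u) + K₀ * (Cx * (Ω1 * u)) := by
          have : u * u ≤ Ω1 * u := mul_le_mul_of_nonneg_right huΩ hu0
          gcongr
      _ = K₁ * u := by rw [hK₁]; ring
  -- Chen's relation for the second level through davieQ
  have hQrt : davieQ d m f Df a (x₂ r t) =
      davieQ d m f Df a (x₂ r s) + davieQ d m f Df a (x₂ s t) +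
        Df a (f a (x₁ r s)) (x₁ s t) := by
    have hx2 : x₂ r t = x₂ r s + (x₂ s t + fun i j => x₁ r s i * x₁ s t j) := by
      funext i j
      have := hchen2 r s t hr hrs hst htT i j
      simp only [Pi.add_apply]
      linarith [this]
    rw [hx2, davieQ_add, davieQ_add, davieQ_tensor]
    abel
  -- the key algebraic identity
  have hkey : davieApprox d m f Df x₁ x₂ t s b - davieApprox d m f Df x₁ x₂ t r a =
      (f b (x₁ s t) - f a (x₁ s t) - Df a (b - a) (x₁ s t)) +
        Df a (davieQ d m f Df a (x₂ r s)) (x₁ s t) +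
        (davieQ d m f Df b (x₂ s t) - davieQ d m f Df a (x₂ s t)) := by
    have hDfba : Df a (b - a) (x₁ s t) = Df a (f a (x₁ r s)) (x₁ s t) +
        Df a (davieQ d m f Df a (x₂ r s)) (x₁ s t) := by
      rw [hsub, map_add, ContinuousLinearMap.add_apply]
    rw [davieApprox_eq, davieApprox_eq, hchen1 r s t hr hrs hst htT, map_add,
      hQrt, hDfba, hbeq]
    abel
  rw [hkey, hufinal]
  -- estimate the three terms
  have hA : ‖f b (x₁ s t) - f a (x₁ s t) - Df a (b - a) (x₁ s t)‖ ≤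
      Cx * (F₂ * K₁ ^ γ * K₁) * u ^ ((2:ℝ) + γ) := by
    have h1 : f b (x₁ s t) - f a (x₁ s t) - Df a (b - a) (x₁ s t) =
        (f b - f a - Df a (b - a)) (x₁ s t) := by
      simp [ContinuousLinearMap.sub_apply]
    rw [h1]
    calc ‖(f b - f a - Df a (b - a)) (x₁ s t)‖
        ≤ ‖f b - f a - Df a (b - a)‖ * ‖x₁ s t‖ := ContinuousLinearMap.le_opNorm _ _
      _ ≤ (F₂ * ‖b - a‖ ^ γ * ‖b - a‖) * (Cx * u) :=
          mul_le_mul (taylor_aux f Df hDf F₂ γ hF₂0 hγ0' hF₂ a b) hX1st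
            (norm_nonneg _) (by positivity)
      _ ≤ (F₂ * (K₁ * u) ^ γ * (K₁ * u)) * (Cx * u) := by
          have hrpow : ‖b - a‖ ^ γ ≤ (K₁ * u) ^ γ :=
            Real.rpow_le_rpow (norm_nonneg _) hbma hγ0'
          have h1 : F₂ * ‖b - a‖ ^ γ * ‖b - a‖ ≤ F₂ * (K₁ * u) ^ γ * (K₁ * u) :=
            mul_le_mul (mul_le_mul_of_nonneg_left hrpow hF₂0) hbma (norm_nonneg _)
              (by positivity)
          exact mul_le_mul_of_nonneg_right h1 (by positivity)
      _ = Cx * (F₂ * K₁ ^ γ * K₁) * (u ^ γ * u * u) := by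
          rw [Real.mul_rpow hK₁0 hu0]; ring
      _ = Cx * (F₂ * K₁ ^ γ * K₁) * u ^ ((2:ℝ) + γ) := by rw [hu2γ]
  have hB : ‖Df a (davieQ d m f Df a (x₂ r s)) (x₁ s t)‖ ≤
      F₁ * (K₀ * Cx) * Cx * E * u ^ ((2:ℝ) + γ) := by
    calc ‖Df a (davieQ d m f Df a (x₂ r s)) (x₁ s t)‖
        ≤ ‖Df a (davieQ d m f Df a (x₂ r s))‖ * ‖x₁ s t‖ :=
          ContinuousLinearMap.le_opNorm _ _
      _ ≤ (‖Df a‖ * ‖davieQ d m f Df a (x₂ r s)‖) * ‖x₁ s t‖ :=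
          mul_le_mul_of_nonneg_right (ContinuousLinearMap.le_opNorm _ _) (norm_nonneg _)
      _ ≤ (F₁ * (K₀ * (Cx * (u * u)))) * (Cx * u) := by
          refine mul_le_mul ?_ hX1st (norm_nonneg _) (by positivity)
          exact mul_le_mul (hF₁ a) ((davieQ_norm_le f Df F₀ F₁ hF₀ hF₁ a (x₂ r s)).trans
            (mul_le_mul_of_nonneg_left hX2rs hK₀0)) (norm_nonneg _) hF₁0
      _ = F₁ * (K₀ * Cx) * Cx * (u * u * u) := by ring
      _ ≤ F₁ * (K₀ * Cx) * Cx * (E * u ^ ((2:ℝ) + γ)) := by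
          refine mul_le_mul_of_nonneg_left hu3 (by positivity)
      _ = F₁ * (K₀ * Cx) * Cx * E * u ^ ((2:ℝ) + γ) := by ring
  have hC : ‖davieQ d m f Df b (x₂ s t) - davieQ d m f Df a (x₂ s t)‖ ≤
      (D2 * Cx * (F₂ * K₁ ^ γ * F₀) + D2 * Cx * (F₁ * (F₁ * K₁)) * E) *
        u ^ ((2:ℝ) + γ) := by
    calc ‖davieQ d m f Df b (x₂ s t) - davieQ d m f Df a (x₂ s t)‖
        ≤ D2 * ‖x₂ s t‖ * (F₂ * ‖b - a‖ ^ γ * F₀ + F₁ * (F₁ * ‖b - a‖)) :=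
          davieQ_sub_norm_le f Df hDf F₀ F₁ F₂ γ hF₂0 hγ0' hF₀ hF₁ hF₂ a b (x₂ s t)
      _ ≤ D2 * (Cx * (u * u)) * (F₂ * ((K₁ * u) ^ γ) * F₀ + F₁ * (F₁ * (K₁ * u))) := by
          have hγle : ‖b - a‖ ^ γ ≤ (K₁ * u) ^ γ :=
            Real.rpow_le_rpow (norm_nonneg _) hbma hγ0'
          have h2 : (0:ℝ) ≤ (K₁ * u) ^ γ := Real.rpow_nonneg (by positivity) _
          gcongr
      _ = D2 * Cx * (F₂ * K₁ ^ γ * F₀) * (u ^ γ * u * u) +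
            D2 * Cx * (F₁ * (F₁ * K₁)) * (u * u * u) := by
          rw [Real.mul_rpow hK₁0 hu0]; ring
      _ ≤ D2 * Cx * (F₂ * K₁ ^ γ * F₀) * u ^ ((2:ℝ) + γ) +
            D2 * Cx * (F₁ * (F₁ * K₁)) * (E * u ^ ((2:ℝ) + γ)) := by
          rw [← hu2γ]
          have : 0 ≤ K₁ ^ γ := Real.rpow_nonneg hK₁0 _
          gcongr
      _ = (D2 * Cx * (F₂ * K₁ ^ γ * F₀) + D2 * Cx * (F₁ * (F₁ * K₁)) * E) *
            u ^ ((2:ℝ) + γ) := by ring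
  calc ‖(f b (x₁ s t) - f a (x₁ s t) - Df a (b - a) (x₁ s t)) +
        Df a (davieQ d m f Df a (x₂ r s)) (x₁ s t) +
        (davieQ d m f Df b (x₂ s t) - davieQ d m f Df a (x₂ s t))‖
      ≤ ‖f b (x₁ s t) - f a (x₁ s t) - Df a (b - a) (x₁ s t)‖ +
        ‖Df a (davieQ d m f Df a (x₂ r s)) (x₁ s t)‖ +
        ‖davieQ d m f Df b (x₂ s t) - davieQ d m f Df a (x₂ s t)‖ := norm_add₃_le
    _ ≤ Cx * (F₂ * K₁ ^ γ * K₁) * u ^ ((2:ℝ) + γ) +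
        F₁ * (K₀ * Cx) * Cx * E * u ^ ((2:ℝ) + γ) +
        (D2 * Cx * (F₂ * K₁ ^ γ * F₀) + D2 * Cx * (F₁ * (F₁ * K₁)) * E) *
          u ^ ((2:ℝ) + γ) := add_le_add (add_le_add hA hB) hC
    _ = (Cx * (F₂ * K₁ ^ γ * K₁) + F₁ * (K₀ * Cx) * Cx * E +
        D2 * Cx * (F₂ * K₁ ^ γ * F₀) + D2 * Cx * (F₁ * (F₁ * K₁)) * E) *
          u ^ ((2:ℝ) + γ) := by ring
end
end

section
/- Let U and V be Banach spaces, 0 < α ≤ 1 and 0 < γ < 1 with θ := α(1+γ) > 1. Let x: [0,T] → U be α-Hölder continuous with Hölder seminorm ‖x‖_α, and f: V → L(U,V) be γ-Hölder continuous with Hölder seminorm ‖f‖_γ. Define χ_{t,s}(a) := f(a)(x_t − x_s) for a ∈ V and (s,t) ∈ 𝕋²₊. Then, with the control ω(s,t) := t − s, the growth function ϖ(u) := u^θ and δ(T) := ‖f‖_γ·‖x‖_α·T^{αγ²}, the family χ is of class O with constant at most γ^γ/(1−γ)^{1−γ}: namely osc(χ_{t,s}, L·(s−r)^θ) ≤ (γ^γ/(1−γ)^{1−γ})·δ(T)·(1+L)·(t−r)^θ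 for all 0 ≤ r ≤ s ≤ t ≤ T and all L ≥ 0. -/
noncomputable section

variable {V : Type*} [NormedAddCommGroup V] [NormedSpace ℝ V]

/-!
Since `f` is `γ`-Hölder, `‖χ_{t,s}(a) - χ_{t,s}(b)‖ ≤ ‖f‖_γ ‖x‖_α ‖a - b‖^γ (t - s)^α`, and
`‖a - b‖ ≤ L (s - r)^θ` turns this into `L^γ (s - r)^{θγ} (t - s)^α`. Splitting
`θγ = αγ + αγ²`, the time factor is at most `T^{αγ²} (t - r)^{αγ + α} = T^{αγ²} (t - r)^θ`,
and weighted AM-GM gives `L^γ ≤ γ^γ (1 - γ)^{1-γ} (1 + L)`, whose constant is at most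
`γ^γ / (1 - γ)^{1-γ}`.
-/

namespace Real

theorem rpow_le_mul_one_add {γ L : ℝ} (hγ0 : 0 < γ) (hγ1 : γ < 1) (hL : 0 ≤ L) :
    L ^ γ ≤ γ ^ γ * (1 - γ) ^ (1 - γ) * (1 + L) := by
  have hγ' : 0 < 1 - γ := by linarith
  -- AM-GM with weights `γ, 1 - γ` at the points `L / γ, 1 / (1 - γ)`
  have amgm := geom_mean_le_arith_mean2_weighted hγ0.le hγ'.le
    (div_nonneg hL hγ0.le) (inv_nonneg.mpr hγ'.le) (add_sub_cancel γ 1)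
  rw [div_rpow hL hγ0.le, inv_rpow hγ'.le,
    show γ * (L / γ) + (1 - γ) * (1 - γ)⁻¹ = 1 + L by field_simp; ring] at amgm
  have hc : 0 < γ ^ γ * (1 - γ) ^ (1 - γ) := by positivity
  calc L ^ γ = L ^ γ / γ ^ γ * ((1 - γ) ^ (1 - γ))⁻¹ * (γ ^ γ * (1 - γ) ^ (1 - γ)) := by
        field_simp
    _ ≤ (1 + L) * (γ ^ γ * (1 - γ) ^ (1 - γ)) := by gcongr
    _ = γ ^ γ * (1 - γ) ^ (1 - γ) * (1 + L) := mul_comm _ _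

theorem rpow_mul_rpow_le_mul_add_rpow {u v T α γ : ℝ} (hu : 0 ≤ u) (hv : 0 ≤ v) (huT : u ≤ T)
    (hα : 0 ≤ α) (hγ : 0 ≤ γ) :
    u ^ (α * (1 + γ) * γ) * v ^ α ≤ T ^ (α * γ * γ) * (u + v) ^ (α * (1 + γ)) := by
  have hT : 0 ≤ T := hu.trans huT
  have huv : 0 ≤ u + v := add_nonneg hu hv
  have hαγ : 0 ≤ α * γ := mul_nonneg hα hγ
  have hαγγ : 0 ≤ α * γ * γ := mul_nonneg hαγ hγ
  calc u ^ (α * (1 + γ) * γ) * v ^ α = u ^ (α * γ * γ) * (u ^ (α * γ) * v ^ α) := by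
        rw [show α * (1 + γ) * γ = α * γ * γ + α * γ by ring, rpow_add_of_nonneg hu hαγγ hαγ]
        ring
    _ ≤ T ^ (α * γ * γ) * ((u + v) ^ (α * γ) * (u + v) ^ α) := by
        gcongr <;> linarith
    _ = T ^ (α * γ * γ) * (u + v) ^ (α * (1 + γ)) := by
        rw [← rpow_add_of_nonneg huv hαγ hα]
        ring_nf

end Real

theorem ContinuousLinearMap.norm_apply_sub_apply_le_of_holder {𝕜 E F X : Type*}
    [NontriviallyNormedField 𝕜] [NormedAddCommGroup E] [NormedSpace 𝕜 E]
    [NormedAddCommGroup F] [NormedSpace 𝕜 F] [SeminormedAddCommGroup X]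
    {f : X → E →L[𝕜] F} {Hf γ : ℝ} (hf : ∀ a b, ‖f a - f b‖ ≤ Hf * ‖a - b‖ ^ γ)
    (a b : X) (v : E) : ‖f a v - f b v‖ ≤ Hf * ‖a - b‖ ^ γ * ‖v‖ :=
  calc ‖f a v - f b v‖ = ‖(f a - f b) v‖ := by rw [sub_apply]
    _ ≤ ‖f a - f b‖ * ‖v‖ := le_opNorm _ _
    _ ≤ Hf * ‖a - b‖ ^ γ * ‖v‖ := by gcongr; exact hf a b

theorem stmt_17_general {U V : Type*} [NormedAddCommGroup U] [NormedSpace ℝ U]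
    [NormedAddCommGroup V] [NormedSpace ℝ V]
    (T α γ : ℝ) (hα0 : 0 < α) (hγ0 : 0 < γ) (hγ1 : γ < 1)
    (x : ℝ → U) (Hx : ℝ) (hHx : 0 ≤ Hx)
    (hx : ∀ s t, 0 ≤ s → s ≤ t → t ≤ T → ‖x t - x s‖ ≤ Hx * (t - s) ^ α)
    (f : V → (U →L[ℝ] V)) (Hf : ℝ) (hHf : 0 ≤ Hf)
    (hf : ∀ a b : V, ‖f a - f b‖ ≤ Hf * ‖a - b‖ ^ γ) :
    ∀ r s t, 0 ≤ r → r ≤ s → s ≤ t → t ≤ T → ∀ L, 0 ≤ L → ∀ a b : V,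
      ‖a - b‖ ≤ L * (s - r) ^ (α * (1 + γ)) →
      ‖f a (x t - x s) - f b (x t - x s)‖ ≤
        γ ^ γ / (1 - γ) ^ (1 - γ) * (Hf * Hx * T ^ (α * γ * γ)) * (1 + L) *
          (t - r) ^ (α * (1 + γ)) := by
  intro r s t hr hrs hst htT L hL a b hab
  have hsr : 0 ≤ s - r := sub_nonneg.mpr hrs
  have hts : 0 ≤ t - s := sub_nonneg.mpr hst
  have hc : γ ^ γ * (1 - γ) ^ (1 - γ) ≤ γ ^ γ / (1 - γ) ^ (1 - γ) := by
    have h0 : 0 < (1 - γ) ^ (1 - γ) := by bound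
    have h1 : (1 - γ) ^ (1 - γ) ≤ 1 := Real.rpow_le_one (by linarith) (by linarith) (by linarith)
    exact (mul_le_of_le_one_right (by positivity) h1).trans (le_div_self (by positivity) h0 h1)
  have htime := Real.rpow_mul_rpow_le_mul_add_rpow hsr hts
    (by linarith : s - r ≤ T) hα0.le hγ0.le
  rw [sub_add_sub_cancel'] at htime
  calc ‖f a (x t - x s) - f b (x t - x s)‖
      ≤ Hf * (L * (s - r) ^ (α * (1 + γ))) ^ γ * (Hx * (t - s) ^ α) := by
        grw [ContinuousLinearMap.norm_apply_sub_apply_le_of_holder hf, hab,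
          hx s t (by linarith) hst htT]
    _ = Hf * Hx * L ^ γ * ((s - r) ^ (α * (1 + γ) * γ) * (t - s) ^ α) := by
        rw [Real.mul_rpow hL (by positivity), ← Real.rpow_mul hsr]
        ring
    _ ≤ Hf * Hx * (γ ^ γ / (1 - γ) ^ (1 - γ) * (1 + L)) *
          (T ^ (α * γ * γ) * (t - r) ^ (α * (1 + γ))) := by
        gcongr Hf * Hx * ?_ * ?_
        grw [Real.rpow_le_mul_one_add hγ0 hγ1 hL, hc]
    _ = _ := by ring

/-- If `x` is `α`-Hölder and `f` is `γ`-Hölder with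
`θ = α(1+γ) > 1`, then `χ_{t,s}(a) = f(a)(x_t - x_s)` is of class `𝒪` with constant
at most `γ^γ/(1-γ)^{1-γ}`, for the control `ω(s,t) = t - s`, `ϖ(u) = u^θ` and
`δ(T) = ‖f‖_γ ‖x‖_α T^{αγ²}`. -/
theorem stmt_17 {U V : Type*} [NormedAddCommGroup U] [NormedSpace ℝ U]
    [NormedAddCommGroup V] [NormedSpace ℝ V]
    (T α γ : ℝ) (hT : 0 < T) (hα0 : 0 < α) (hα1 : α ≤ 1) (hγ0 : 0 < γ) (hγ1 : γ < 1)
    (hθ : 1 < α * (1 + γ))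
    (x : ℝ → U) (Hx : ℝ) (hHx : 0 ≤ Hx)
    (hx : ∀ s t, 0 ≤ s → s ≤ t → t ≤ T → ‖x t - x s‖ ≤ Hx * (t - s) ^ α)
    (f : V → (U →L[ℝ] V)) (Hf : ℝ) (hHf : 0 ≤ Hf)
    (hf : ∀ a b : V, ‖f a - f b‖ ≤ Hf * ‖a - b‖ ^ γ) :
    ∀ r s t, 0 ≤ r → r ≤ s → s ≤ t → t ≤ T → ∀ L, 0 ≤ L → ∀ a b : V,
      ‖a - b‖ ≤ L * (s - r) ^ (α * (1 + γ)) →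
      ‖f a (x t - x s) - f b (x t - x s)‖ ≤
        γ ^ γ / (1 - γ) ^ (1 - γ) * (Hf * Hx * T ^ (α * γ * γ)) * (1 + L) *
          (t - r) ^ (α * (1 + γ)) :=
  stmt_17_general T α γ hα0 hγ0 hγ1 x Hx hHx hx f Hf hHf hf
end
end

section
/- (Uniqueness of D-solutions associated to a Lipschitz flow.) Let ω be a control on 𝕋²₊ that is continuous near its diagonal, in the sense that sup{ω(u,v): 0 ≤ u ≤ v ≤ T, v − u ≤ h} → 0 as h → 0⁺. Let ϖ: [0,∞) → [0,∞) be nondecreasing with ϖ(0) = 0 and 2ϖ(x/2) ≤ κ·ϖ(x) for all x ≥ 0, for some κ ∈ (0,1) (so that ϖ(x)/x → 0 as x → 0⁺). Let φ = (φ_{t,s})_{(s,t)∈𝕋²₊} be a flow on a Banach space V, i.e. φ_{t,s}(φ_{s,r}(a)) = φ_{t,r}(a) for all (r,s,t) ∈ 𝕋³₊ and a ∈ V, such that each φ_{t,s} is Lipschitz with Lipschitz constant ≤ Λ₀ uniformly in (s,t) ∈ 𝕋²₊. If y: [0,T] → V satisfies y_0 = a and ‖y_t − φ_{t,s}(y_s)‖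 ≤ K·ϖ(ω(s,t)) for all (s,t) ∈ 𝕋²₊ and some K ≥ 0, then y_t = φ_{t,0}(a) for all t ∈ [0,T]. In particular, the D-solution started at a associated with the flow φ is unique. -/
noncomputable section

variable {V : Type*} [NormedAddCommGroup V] [NormedSpace ℝ V]

/-- (Uniqueness of D-solutions associated to a Lipschitz flow.)
If `φ` is a flow whose maps are uniformly Lipschitz, `ω` is continuous near its
diagonal and `2ϖ(x/2) ≤ κ ϖ(x)` with `κ < 1`, then any D-solution `y` started at `a`
satisfies `y_t = φ_{t,0}(a)`; in particular it is unique. -/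
theorem stmt_18 {V : Type*} [NormedAddCommGroup V] [NormedSpace ℝ V]
    (T : ℝ) (hT : 0 < T) (ω : ℝ → ℝ → ℝ) (hω : IsControl T ω)
    (hωdiag : ∀ ε > (0:ℝ), ∃ h > (0:ℝ), ∀ u v, 0 ≤ u → u ≤ v → v ≤ T →
      v - u ≤ h → ω u v ≤ ε)
    (ϖ : ℝ → ℝ) (hϖmono : ∀ x y, 0 ≤ x → x ≤ y → ϖ x ≤ ϖ y) (hϖ0 : ϖ 0 = 0)
    (κ : ℝ) (hκ0 : 0 < κ) (hκ1 : κ < 1)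
    (hϖκ : ∀ x, 0 ≤ x → 2 * ϖ (x / 2) ≤ κ * ϖ x)
    (φ : ℝ → ℝ → V → V)
    (hflow : ∀ r s t, 0 ≤ r → r ≤ s → s ≤ t → t ≤ T → ∀ a : V,
      φ t s (φ s r a) = φ t r a)
    (Λ₀ : ℝ) (hΛ₀ : 0 ≤ Λ₀)
    (hlip : ∀ s t, 0 ≤ s → s ≤ t → t ≤ T → ∀ a b : V,
      ‖φ t s a - φ t s b‖ ≤ Λ₀ * ‖a - b‖)
    (a : V) (K : ℝ) (hK : 0 ≤ K) (y : ℝ → V) (hy0 : y 0 = a)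
    (hy : ∀ s t, 0 ≤ s → s ≤ t → t ≤ T → ‖y t - φ t s (y s)‖ ≤ K * ϖ (ω s t)) :
    ∀ t ∈ Set.Icc (0:ℝ) T, y t = φ t 0 a := by
  obtain ⟨hωnn, hωd, hωsup⟩ := hω
  intro t ht
  obtain ⟨ht0, htT⟩ := ht
  have hϖnn : ∀ x, 0 ≤ x → 0 ≤ ϖ x := fun x hx => hϖ0 ▸ hϖmono 0 x le_rfl hx
  set g : ℝ → V := fun s => φ t s (y s) with hg
  have hgt : g t = y t := by
    have h1 := hy t t ht0 le_rfl htT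
    rw [hωd t ht0 htT, hϖ0, mul_zero] at h1
    have h2 : y t - φ t t (y t) = 0 := norm_le_zero_iff.mp h1
    simp only [hg]
    have := sub_eq_zero.mp h2
    exact this.symm
  -- single increment bound
  have hstep : ∀ s₁ s₂, 0 ≤ s₁ → s₁ ≤ s₂ → s₂ ≤ t →
      ‖g s₂ - g s₁‖ ≤ Λ₀ * K * ϖ (ω s₁ s₂) := by
    intro s₁ s₂ h0 h12 h2t
    have h2T : s₂ ≤ T := h2t.trans htT
    have hfl : φ t s₂ (φ s₂ s₁ (y s₁)) = φ t s₁ (y s₁) :=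
      hflow s₁ s₂ t h0 h12 h2t htT (y s₁)
    have : g s₂ - g s₁ = φ t s₂ (y s₂) - φ t s₂ (φ s₂ s₁ (y s₁)) := by
      simp only [hg]; rw [hfl]
    rw [this, mul_assoc]
    calc ‖φ t s₂ (y s₂) - φ t s₂ (φ s₂ s₁ (y s₁))‖
        ≤ Λ₀ * ‖y s₂ - φ s₂ s₁ (y s₁)‖ :=
          hlip s₂ t (h0.trans h12) h2t htT _ _
      _ ≤ Λ₀ * (K * ϖ (ω s₁ s₂)) :=
          mul_le_mul_of_nonneg_left (hy s₁ s₂ h0 h12 h2T) hΛ₀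
  have hcnn : 0 ≤ Λ₀ * K := mul_nonneg hΛ₀ hK
  -- key induction
  have hind : ∀ n : ℕ, ∀ η : ℝ, 0 < η → ∀ h : ℝ, 0 < h →
      (∀ u v, 0 ≤ u → u ≤ v → v ≤ T → v - u ≤ h → ω u v ≤ η) →
      ∀ s₁ s₂, 0 ≤ s₁ → s₁ ≤ s₂ → s₂ ≤ t →
      ‖g s₂ - g s₁‖ ≤ Λ₀ * K * (κ ^ n * ϖ (ω s₁ s₂) + ((2:ℝ) ^ n - 1) * ϖ η) := by
    intro n
    induction n with
    | zero =>
      intro η hη h hh hdiag s₁ s₂ h0 h12 h2t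
      have := hstep s₁ s₂ h0 h12 h2t
      simpa using this
    | succ n ih =>
      intro η hη h hh hdiag s₁ s₂ h0 h12 h2t
      have h2T : s₂ ≤ T := h2t.trans htT
      have hΩnn : 0 ≤ ω s₁ s₂ := hωnn s₁ s₂ h0 h12 h2T
      set Ω := ω s₁ s₂ with hΩ
      set S : Set ℝ := {w | w ∈ Set.Icc s₁ s₂ ∧ ω s₁ w ≤ Ω / 2} with hS
      have hs₁S : s₁ ∈ S := by
        refine ⟨⟨le_rfl, h12⟩, ?_⟩
        rw [hωd s₁ h0 (h12.trans h2T)]; linarith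
      have hne : S.Nonempty := ⟨s₁, hs₁S⟩
      have hbdd : BddAbove S := ⟨s₂, fun w hw => hw.1.2⟩
      set m := sSup S with hm
      have hms₂ : m ≤ s₂ := csSup_le hne (fun w hw => hw.1.2)
      obtain ⟨u, huS, hu⟩ := exists_lt_of_lt_csSup hne (show m - h/2 < m by linarith)
      have hum : u ≤ m := le_csSup hbdd huS
      have hs₁u : s₁ ≤ u := huS.1.1
      have hus₂ : u ≤ s₂ := huS.1.2
      have h0u : 0 ≤ u := h0.trans hs₁u
      set v := min s₂ (u + h) with hv
      have huv : u ≤ v := le_min hus₂ (by linarith)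
      have hvs₂ : v ≤ s₂ := min_le_left _ _
      have hvu : v - u ≤ h := by
        have := min_le_right s₂ (u + h); simp only [hv]; linarith
      have hωuv : ω u v ≤ η := hdiag u v h0u huv (hvs₂.trans h2T) hvu
      have hωs₁u : ω s₁ u ≤ Ω / 2 := huS.2
      have hωvs₂ : ω v s₂ ≤ Ω / 2 := by
        rcases le_or_gt s₂ (u + h) with hc | hc
        · have hv2 : v = s₂ := min_eq_left hc
          rw [hv2, hωd s₂ (h0.trans h12) h2T]; linarith
        · have hv2 : v = u + h := min_eq_right hc.le
          have hvnotS : v ∉ S := by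
            intro hvS
            have := le_csSup hbdd hvS
            rw [hv2] at this; linarith
          have : ¬ ω s₁ v ≤ Ω / 2 := by
            intro hcon; exact hvnotS ⟨⟨hs₁u.trans huv, hvs₂⟩, hcon⟩
          have h1 : Ω / 2 < ω s₁ v := lt_of_not_ge this
          have h2 : ω s₁ v + ω v s₂ ≤ Ω :=
            hωsup s₁ v s₂ h0 (hs₁u.trans huv) hvs₂ h2T
          linarith
      -- apply IH on [s₁,u] and [v,s₂], step on [u,v]
      have IH1 := ih η hη h hh hdiag s₁ u h0 hs₁u (hus₂.trans h2t)
      have IH3 := ih η hη h hh hdiag v s₂ (h0u.trans huv) hvs₂ h2t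
      have MID := hstep u v h0u huv (hvs₂.trans h2t)
      have htri : ‖g s₂ - g s₁‖ ≤ ‖g s₂ - g v‖ + ‖g v - g u‖ + ‖g u - g s₁‖ := by
        have := dist_triangle4 (g s₂) (g v) (g u) (g s₁)
        simpa [dist_eq_norm] using this
      have hP1 : ϖ (ω s₁ u) ≤ ϖ (Ω / 2) :=
        hϖmono _ _ (hωnn s₁ u h0 hs₁u (hus₂.trans h2T)) hωs₁u
      have hP3 : ϖ (ω v s₂) ≤ ϖ (Ω / 2) :=
        hϖmono _ _ (hωnn v s₂ (h0u.trans huv) hvs₂ h2T) hωvs₂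
      have hP2 : ϖ (ω u v) ≤ ϖ η :=
        hϖmono _ _ (hωnn u v h0u huv (hvs₂.trans h2T)) hωuv
      have hhalf : 2 * ϖ (Ω / 2) ≤ κ * ϖ Ω := hϖκ Ω hΩnn
      have hknn : (0:ℝ) ≤ κ ^ n := pow_nonneg hκ0.le n
      have hen : (0:ℝ) ≤ (2:ℝ) ^ n - 1 := by
        have : (1:ℝ) ≤ 2 ^ n := one_le_pow₀ (by norm_num)
        linarith
      have hPη : 0 ≤ ϖ η := hϖnn η hη.le
      have hkey : κ ^ n * ϖ (ω s₁ u) + ((2:ℝ) ^ n - 1) * ϖ η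
            + ϖ (ω u v)
            + (κ ^ n * ϖ (ω v s₂) + ((2:ℝ) ^ n - 1) * ϖ η)
          ≤ κ ^ (n+1) * ϖ Ω + ((2:ℝ) ^ (n+1) - 1) * ϖ η := by
        have h1 : κ ^ n * (ϖ (ω s₁ u) + ϖ (ω v s₂)) ≤ κ ^ n * (κ * ϖ Ω) :=
          mul_le_mul_of_nonneg_left (by linarith) hknn
        rw [pow_succ, pow_succ]
        nlinarith
      calc ‖g s₂ - g s₁‖ ≤ ‖g s₂ - g v‖ + ‖g v - g u‖ + ‖g u - g s₁‖ := htri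
        _ ≤ Λ₀ * K * (κ ^ n * ϖ (ω v s₂) + ((2:ℝ) ^ n - 1) * ϖ η)
            + Λ₀ * K * ϖ (ω u v)
            + Λ₀ * K * (κ ^ n * ϖ (ω s₁ u) + ((2:ℝ) ^ n - 1) * ϖ η) := by
            linarith
        _ = Λ₀ * K * (κ ^ n * ϖ (ω s₁ u) + ((2:ℝ) ^ n - 1) * ϖ η
              + ϖ (ω u v)
              + (κ ^ n * ϖ (ω v s₂) + ((2:ℝ) ^ n - 1) * ϖ η)) := by ring
        _ ≤ Λ₀ * K * (κ ^ (n+1) * ϖ Ω + ((2:ℝ) ^ (n+1) - 1) * ϖ η) :=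
            mul_le_mul_of_nonneg_left hkey hcnn
  -- smallness of ϖ near 0
  have hϖsmall : ∀ m : ℕ, ϖ ((1:ℝ) / 2 ^ m) ≤ (κ / 2) ^ m * ϖ 1 := by
    intro m
    induction m with
    | zero => simp
    | succ m ihm =>
      have h1 : (1:ℝ) / 2 ^ (m+1) = (1 / 2 ^ m) / 2 := by
        rw [pow_succ]; ring
      have h2 : ϖ ((1 / 2 ^ m) / 2) ≤ κ / 2 * ϖ (1 / 2 ^ m) := by
        have := hϖκ (1 / 2 ^ m) (by positivity)
        linarith
      rw [h1]
      calc ϖ ((1 / 2 ^ m) / 2) ≤ κ / 2 * ϖ (1 / 2 ^ m) := h2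
        _ ≤ κ / 2 * ((κ / 2) ^ m * ϖ 1) :=
            mul_le_mul_of_nonneg_left ihm (by positivity)
        _ = (κ / 2) ^ (m+1) * ϖ 1 := by rw [pow_succ]; ring
  -- conclusion
  have key : ∀ ε : ℝ, 0 < ε → ‖y t - φ t 0 a‖ ≤ ε := by
    intro ε hε
    have hκpow : Filter.Tendsto (fun n : ℕ => (Λ₀ * K * ϖ (ω 0 t)) * κ ^ n)
        Filter.atTop (nhds 0) := by
      have := tendsto_pow_atTop_nhds_zero_of_lt_one hκ0.le hκ1
      simpa using this.const_mul (Λ₀ * K * ϖ (ω 0 t))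
    obtain ⟨n, hn⟩ := (hκpow.eventually (gt_mem_nhds (show (0:ℝ) < ε/2 by linarith))).exists
    have hκ2pow : Filter.Tendsto
        (fun m : ℕ => (Λ₀ * K * (((2:ℝ) ^ n - 1)) * ϖ 1) * (κ / 2) ^ m)
        Filter.atTop (nhds 0) := by
      have := tendsto_pow_atTop_nhds_zero_of_lt_one (by positivity : (0:ℝ) ≤ κ/2)
        (by linarith : κ / 2 < 1)
      simpa using this.const_mul (Λ₀ * K * (((2:ℝ) ^ n - 1)) * ϖ 1)
    obtain ⟨m, hmlt⟩ := (hκ2pow.eventually (gt_mem_nhds (show (0:ℝ) < ε/2 by linarith))).exists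
    obtain ⟨h, hh0, hdiag⟩ := hωdiag ((1:ℝ) / 2 ^ m) (by positivity)
    have hmain := hind n ((1:ℝ) / 2 ^ m) (by positivity) h hh0 hdiag 0 t le_rfl ht0 le_rfl
    have hg0 : g 0 = φ t 0 a := by simp only [hg]; rw [hy0]
    have heq : y t - φ t 0 a = g t - g 0 := by rw [hgt, hg0]
    rw [heq]
    have hen : (0:ℝ) ≤ (2:ℝ) ^ n - 1 := by
      have : (1:ℝ) ≤ 2 ^ n := one_le_pow₀ (by norm_num)
      linarith
    have hb2 : Λ₀ * K * (((2:ℝ) ^ n - 1) * ϖ ((1:ℝ) / 2 ^ m)) ≤ ε / 2 := by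
      have h1 : ϖ ((1:ℝ) / 2 ^ m) ≤ (κ / 2) ^ m * ϖ 1 := hϖsmall m
      have h2 : Λ₀ * K * (((2:ℝ) ^ n - 1) * ϖ ((1:ℝ) / 2 ^ m))
          ≤ Λ₀ * K * (((2:ℝ) ^ n - 1) * ((κ / 2) ^ m * ϖ 1)) := by
        apply mul_le_mul_of_nonneg_left _ hcnn
        exact mul_le_mul_of_nonneg_left h1 hen
      have h3 : Λ₀ * K * (((2:ℝ) ^ n - 1) * ((κ / 2) ^ m * ϖ 1))
          = (Λ₀ * K * (((2:ℝ) ^ n - 1)) * ϖ 1) * (κ / 2) ^ m := by ring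
      linarith [hmlt]
    have hb1 : Λ₀ * K * (κ ^ n * ϖ (ω 0 t)) ≤ ε / 2 := by
      have : (Λ₀ * K * ϖ (ω 0 t)) * κ ^ n = Λ₀ * K * (κ ^ n * ϖ (ω 0 t)) := by ring
      linarith [hn]
    calc ‖g t - g 0‖
        ≤ Λ₀ * K * (κ ^ n * ϖ (ω 0 t) + ((2:ℝ) ^ n - 1) * ϖ ((1:ℝ) / 2 ^ m)) := hmain
      _ = Λ₀ * K * (κ ^ n * ϖ (ω 0 t)) + Λ₀ * K * (((2:ℝ) ^ n - 1) * ϖ ((1:ℝ) / 2 ^ m)) := by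
          ring
      _ ≤ ε := by linarith
  have hzero : ‖y t - φ t 0 a‖ ≤ 0 := le_of_forall_pos_le_add (by
    intro ε hε
    have := key ε hε
    linarith)
  have := norm_le_zero_iff.mp hzero
  exact sub_eq_zero.mp this
end
end
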